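/- arXiv:1506.02680 — 11 statements merged into one kernel-verified Lean document; each statement's English description precedes it below -/
import Mathlib

section
/- Let λ ∈ ℝ with λ ∉ ℤ_{≥0}, and for an integer j ≥ 1 set P_j(λ) = ∏_{i=1}^j i·(λ − i + 1). Then P_j(λ) ≠ 0, and: (i) if λ < 0 then sign(P_j(λ)) = (−1)^j; (ii) if λ > 0 and j ≤ ⌊λ⌋ then sign(P_j(λ)) = 1; (iii) if λ > 0 and j ≥ ⌈λ⌉ then sign(P_j(λ)) = (−1)^{j+⌈λ⌉}. (Here sign(x) = x/|x| for x ≠ 0.) -/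
/-!
For `i ≥ 1` the factor `i * (λ - i + 1)` is negative exactly when `i - 1 > λ`, which for
`λ ∉ ℕ` means `i > ⌈λ⌉₊`. A product of nonzero reals has sign `(-1)` to the number of
negative factors, so `sign P_j(λ) = (-1) ^ (j - ⌈λ⌉₊)`; the three cases are this formula with
`⌈λ⌉₊ = 0`, `j ≤ ⌈λ⌉₊`, and `⌈λ⌉₊ = ⌈λ⌉ ≤ j` respectively.
-/

open Finset

lemma Real.sign_eq_neg_one_pow_of_pos_mul {x : ℝ} {k : ℕ} (h : 0 < (-1) ^ k * x) :
    Real.sign x = (-1) ^ k := by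
  rcases k.even_or_odd with hk | hk
  · rw [hk.neg_one_pow] at h ⊢
    exact Real.sign_of_pos (by linarith)
  · rw [hk.neg_one_pow] at h ⊢
    exact Real.sign_of_neg (by linarith)

lemma Real.sign_prod_eq_neg_one_pow {ι : Type*} (s : Finset ι) (f : ι → ℝ)
    (hf : ∀ i ∈ s, f i ≠ 0) :
    Real.sign (∏ i ∈ s, f i) = (-1) ^ #{i ∈ s | f i < 0} := by
  apply Real.sign_eq_neg_one_pow_of_pos_mul
  rw [← prod_filter_mul_prod_filter_not s (fun i ↦ f i < 0), ← mul_assoc, ← prod_neg]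
  refine mul_pos (prod_pos fun i hi ↦ ?_) (prod_pos fun i hi ↦ ?_)
  · exact neg_pos.2 (mem_filter.1 hi).2
  · obtain ⟨hs, hnonneg⟩ := mem_filter.1 hi
    exact lt_of_le_of_ne (not_lt.1 hnonneg) (hf i hs).symm

lemma lt_natCast_iff_natCeil_le_of_ne {α : Type*} [Semiring α] [LinearOrder α] [IsOrderedRing α]
    [FloorSemiring α] {a : α} {n : ℕ} (h : a ≠ n) : a < n ↔ ⌈a⌉₊ ≤ n := by
  rw [Nat.ceil_le, le_iff_lt_or_eq, or_iff_left h]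

def shapovalovNorm (lam : ℝ) (j : ℕ) : ℝ :=
  ∏ i ∈ Icc 1 j, (i : ℝ) * (lam - i + 1)

section Generic

variable {lam : ℝ} (hlam : ∀ n : ℕ, lam ≠ n)
include hlam

lemma shapovalov_factor_ne_zero {i : ℕ} (hi : 1 ≤ i) : (i : ℝ) * (lam - i + 1) ≠ 0 := by
  refine mul_ne_zero (by positivity) fun h ↦ hlam (i - 1) ?_
  rw [Nat.cast_sub hi, Nat.cast_one]
  linarith

lemma shapovalov_factor_neg_iff {i : ℕ} (hi : 1 ≤ i) :
    (i : ℝ) * (lam - i + 1) < 0 ↔ ⌈lam⌉₊ < i := by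
  have hpos : (0 : ℝ) < i := by positivity
  rw [← smul_eq_mul, smul_neg_iff_of_pos_left hpos, sub_add, sub_neg,
    ← Nat.cast_pred hi, lt_natCast_iff_natCeil_le_of_ne (hlam _)]
  omega

theorem sign_shapovalovNorm (j : ℕ) :
    Real.sign (shapovalovNorm lam j) = (-1) ^ (j - ⌈lam⌉₊) := by
  have hneg : {i ∈ Icc 1 j | ((i : ℕ) : ℝ) * (lam - i + 1) < 0} = Ioc ⌈lam⌉₊ j := by
    ext i
    simp only [mem_filter, mem_Icc, mem_Ioc]
    constructor
    · rintro ⟨⟨hi, hij⟩, h⟩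
      exact ⟨(shapovalov_factor_neg_iff hlam hi).1 h, hij⟩
    · rintro ⟨hci, hij⟩
      have hi : 1 ≤ i := by omega
      exact ⟨⟨hi, hij⟩, (shapovalov_factor_neg_iff hlam hi).2 hci⟩
  rw [shapovalovNorm, Real.sign_prod_eq_neg_one_pow _ _
    fun i hi ↦ shapovalov_factor_ne_zero hlam (mem_Icc.1 hi).1, hneg, Nat.card_Ioc]

end Generic

theorem stmt_0_general (lam : ℝ) (hlam : ∀ n : ℕ, lam ≠ n) (j : ℕ) :
    (∏ i ∈ Finset.Icc 1 j, (i : ℝ) * (lam - i + 1)) ≠ 0 ∧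
    (lam < 0 →
      Real.sign (∏ i ∈ Finset.Icc 1 j, (i : ℝ) * (lam - i + 1)) = (-1 : ℝ) ^ j) ∧
    (0 < lam → (j : ℤ) ≤ ⌊lam⌋ →
      Real.sign (∏ i ∈ Finset.Icc 1 j, (i : ℝ) * (lam - i + 1)) = 1) ∧
    (0 < lam → ⌈lam⌉ ≤ (j : ℤ) →
      Real.sign (∏ i ∈ Finset.Icc 1 j, (i : ℝ) * (lam - i + 1)) =
        (-1 : ℝ) ^ ((j : ℤ) + ⌈lam⌉)) := by
  have hsign := sign_shapovalovNorm hlam j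
  refine ⟨prod_ne_zero_iff.2 fun i hi ↦ shapovalov_factor_ne_zero hlam (mem_Icc.1 hi).1,
    fun hneg ↦ ?_, fun _ hjfloor ↦ ?_, fun hpos hceil ↦ ?_⟩
  · rwa [Nat.ceil_eq_zero.2 hneg.le, Nat.sub_zero] at hsign
  · have hjlam : (j : ℝ) ≤ lam := by exact_mod_cast Int.le_floor.1 hjfloor
    rwa [Nat.sub_eq_zero_of_le (Nat.cast_le.1 (hjlam.trans (Nat.le_ceil lam))), pow_zero] at hsign
  · rw [← Int.natCast_ceil_eq_ceil hpos.le] at hceil ⊢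
    obtain ⟨k, rfl⟩ := Nat.exists_eq_add_of_le (Nat.cast_le.1 hceil)
    rw [show ((⌈lam⌉₊ + k : ℕ) : ℤ) + ⌈lam⌉₊ = ((k + 2 * ⌈lam⌉₊ : ℕ) : ℤ) by push_cast; ring,
      zpow_natCast, pow_add, pow_mul, neg_one_sq, one_pow, mul_one]
    rwa [Nat.add_sub_cancel_left] at hsign

/-- For generic `λ` (not a nonnegative integer) and `j ≥ 1`, the Shapovalov
norm `P_j(λ) = ∏_{i=1}^j i·(λ − i + 1)` is nonzero, and its sign is as described. -/
theorem stmt_0 (lam : ℝ) (hlam : ∀ n : ℕ, lam ≠ n) (j : ℕ) (hj : 1 ≤ j) :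
    (∏ i ∈ Finset.Icc 1 j, (i : ℝ) * (lam - i + 1)) ≠ 0 ∧
    (lam < 0 →
      Real.sign (∏ i ∈ Finset.Icc 1 j, (i : ℝ) * (lam - i + 1)) = (-1 : ℝ) ^ j) ∧
    (0 < lam → (j : ℤ) ≤ ⌊lam⌋ →
      Real.sign (∏ i ∈ Finset.Icc 1 j, (i : ℝ) * (lam - i + 1)) = 1) ∧
    (0 < lam → ⌈lam⌉ ≤ (j : ℤ) →
      Real.sign (∏ i ∈ Finset.Icc 1 j, (i : ℝ) * (lam - i + 1)) =
        (-1 : ℝ) ^ ((j : ℤ) + ⌈lam⌉)) :=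
  stmt_0_general lam hlam j
end

section
/- Let μ ∈ ℝ with μ ∉ ℤ. Then for every k ∈ ℤ: [k = 0] = f_μ(k) − sign(μ)·f_{μ−2}(k−1) + (sign(1−μ) − 1)·f_{μ−2⌈μ⌉}(k−⌈μ⌉), where [k = 0] equals 1 if k = 0 and 0 otherwise, and sign(x) = x/|x| for x ≠ 0. -/
open scoped Classical

/-- `fsig λ k` is the coefficient of `e^{λ-2k}` in the signature character of the
Verma module `M_λ` evaluated at `s = -1`. -/
noncomputable def fsig (lam : ℝ) (k : ℤ) : ℤ :=
  if k < 0 then 0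
  else if lam < 0 then (-1) ^ k.toNat
  else if k ≤ ⌊lam⌋ then 1
  else (-1) ^ (k + ⌈lam⌉).toNat

/-- `signZ x = x/|x|` for `x ≠ 0` (and `0` at `0`), valued in `ℤ`. -/
noncomputable def signZ (x : ℝ) : ℤ :=
  if 0 < x then 1 else if x < 0 then -1 else 0

/-!
For non-integral `λ > -1` the sequence `f_λ` splits as the indicator of `[0, ⌈λ⌉)` plus the
alternating tail `(-1)^(k - ⌈λ⌉)` starting at `⌈λ⌉`, and for `λ < 0` it is the alternating tail
starting at `0`. A shifted alternating tail telescopes against the unshifted one,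
`altSeq k + altSeq (k - 1) = [k = 0]`, and after these rewritings the identity is bookkeeping with
indicators of intervals.
-/

def altSeq (k : ℤ) : ℤ :=
  if k < 0 then 0 else (-1) ^ k.toNat

lemma altSeq_add_altSeq_sub_one (k : ℤ) :
    altSeq k + altSeq (k - 1) = if k = 0 then 1 else 0 := by
  rcases lt_trichotomy k 0 with hk | rfl | hk
  · simp [altSeq, hk, hk.ne, show k - 1 < 0 by omega]
  · simp [altSeq]
  · have hsucc : k.toNat = (k - 1).toNat + 1 := by omega
    rw [altSeq, altSeq, if_neg (by omega), if_neg (by omega), if_neg hk.ne', hsucc, pow_succ]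
    ring

lemma fsig_of_neg {lam : ℝ} (hl : lam < 0) (k : ℤ) : fsig lam k = altSeq k := by
  simp only [fsig, altSeq, hl, if_true]

lemma fsig_of_pos {lam : ℝ} (hl : 0 < lam) (hlam : lam ∉ Set.range ((↑) : ℤ → ℝ)) (k : ℤ) :
    fsig lam k = (if 0 ≤ k ∧ k < ⌈lam⌉ then 1 else 0) + altSeq (k - ⌈lam⌉) := by
  have hfloor : ⌊lam⌋ = ⌈lam⌉ - 1 := by
    rw [(Int.ceil_eq_floor_add_one_iff_notMem lam).2 hlam]; ring
  have hceil : 0 ≤ ⌈lam⌉ := (Int.ceil_pos.2 hl).le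
  unfold fsig altSeq
  rw [if_neg hl.not_gt, hfloor]
  by_cases hk : k < 0
  · simp [hk, show k - ⌈lam⌉ < 0 by omega]
  by_cases hk' : k ≤ ⌈lam⌉ - 1
  · simp [hk, hk', show k < ⌈lam⌉ by omega, show k - ⌈lam⌉ < 0 by omega]
  · have htoNat : (k + ⌈lam⌉).toNat = (k - ⌈lam⌉).toNat + 2 * ⌈lam⌉.toNat := by omega
    simp [hk, hk', show ¬k < ⌈lam⌉ by omega, show ¬k - ⌈lam⌉ < 0 by omega, htoNat, pow_add,
      pow_mul]

lemma fsig_of_neg_one_lt {lam : ℝ} (hl : -1 < lam) (hlam : lam ∉ Set.range ((↑) : ℤ → ℝ))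
    (k : ℤ) : fsig lam k = (if 0 ≤ k ∧ k < ⌈lam⌉ then 1 else 0) + altSeq (k - ⌈lam⌉) := by
  rcases lt_or_gt_of_ne (show lam ≠ 0 from fun h ↦ hlam ⟨0, by simp [h]⟩) with hneg | hpos
  · have hceil : ⌈lam⌉ = 0 := Int.ceil_eq_iff.2 ⟨by simpa using hl, by simpa using hneg.le⟩
    simp [fsig_of_neg hneg, hceil, show ¬(0 ≤ k ∧ k < 0) by omega]
  · exact fsig_of_pos hpos hlam k

lemma signZ_of_pos {x : ℝ} (hx : 0 < x) : signZ x = 1 := if_pos hx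

lemma signZ_of_neg {x : ℝ} (hx : x < 0) : signZ x = -1 := by
  rw [signZ, if_neg hx.not_gt, if_pos hx]

/-- the identity
`[k = 0] = f_μ(k) − sign(μ)·f_{μ−2}(k−1) + (sign(1−μ) − 1)·f_{μ−2⌈μ⌉}(k−⌈μ⌉)`. -/
theorem stmt_2 (μ : ℝ) (hμ : ∀ n : ℤ, μ ≠ n) (k : ℤ) :
    (if k = 0 then (1 : ℤ) else 0) =
      fsig μ k - signZ μ * fsig (μ - 2) (k - 1) +
        (signZ (1 - μ) - 1) * fsig (μ - 2 * ⌈μ⌉) (k - ⌈μ⌉) := by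
  have hnotInt : μ ∉ Set.range ((↑) : ℤ → ℝ) := fun ⟨n, hn⟩ ↦ hμ n hn.symm
  rcases lt_or_gt_of_ne (by exact_mod_cast hμ 0 : μ ≠ 0) with hneg | hpos
  · rw [signZ_of_neg hneg, signZ_of_pos (by linarith), fsig_of_neg hneg,
      fsig_of_neg (by linarith), ← altSeq_add_altSeq_sub_one]
    ring
  rw [signZ_of_pos hpos]
  rcases lt_or_gt_of_ne (by exact_mod_cast hμ 1 : μ ≠ 1) with hlt | hgt
  · have hceil : ⌈μ⌉ = 1 := Int.ceil_eq_iff.2 ⟨by simpa using hpos, by simpa using hlt.le⟩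
    rw [signZ_of_pos (by linarith), fsig_of_pos hpos hnotInt, fsig_of_neg (by linarith), hceil]
    simp only [show (0 ≤ k ∧ k < 1) ↔ k = 0 by omega]
    ring
  · have hceil2 : ⌈μ - 2⌉ = ⌈μ⌉ - 2 := Int.ceil_sub_ofNat μ 2
    have hceil : 1 < ⌈μ⌉ := Int.lt_ceil.2 (by exact_mod_cast hgt)
    have hshift : μ - 2 ∉ Set.range ((↑) : ℤ → ℝ) := fun ⟨n, hn⟩ ↦
      hμ (n + 2) (by push_cast; linarith)
    have htail : μ - 2 * ⌈μ⌉ < 0 := by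
      have : μ ≤ ⌈μ⌉ := Int.le_ceil μ
      have : (2 : ℝ) ≤ ⌈μ⌉ := by exact_mod_cast (show (2 : ℤ) ≤ ⌈μ⌉ by omega)
      linarith
    have htelescope := altSeq_add_altSeq_sub_one (k - ⌈μ⌉ + 1)
    rw [signZ_of_neg (by linarith), fsig_of_pos hpos hnotInt,
      fsig_of_neg_one_lt (by linarith) hshift, fsig_of_neg htail, hceil2,
      show k - 1 - (⌈μ⌉ - 2) = k - ⌈μ⌉ + 1 by ring]
    rw [show k - ⌈μ⌉ + 1 - 1 = k - ⌈μ⌉ by ring] at htelescope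
    split_ifs at htelescope ⊢ <;> omega
end

section
/- Let m ≥ 1, let t_1,…,t_m ∈ ℂ, let Q(X) = ∏_{i=1}^m (X − t_i), and let z_1, z_2 ∈ ℂ with Q(z_2) ≠ 0. Then for every integer 0 ≤ k ≤ m: Σ_{S ⊆ {1,…,m}, |S| = k} ∏_{i ∈ S} (t_i − z_1)/(t_i − z_2) = C(m,k) + Σ_{j=1}^{k} C(m−j, k−j)·((z_1 − z_2)^j / j!)·Q^{(j)}(z_2)/Q(z_2), where C(·,·) denotes the binomial coefficient and Q^{(j)} the j-th derivative of Q. -/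
open Polynomial

lemma card_supersets {n k : ℕ} (t : Finset (Fin n)) (hk : t.card ≤ k) :
    ((Finset.powersetCard k (Finset.univ : Finset (Fin n))).filter (fun S => t ⊆ S)).card
      = (n - t.card).choose (k - t.card) := by
  have h1 : (Finset.powersetCard (k - t.card) tᶜ).card = (n - t.card).choose (k - t.card) := by
    rw [Finset.card_powersetCard, Finset.card_compl, Fintype.card_fin]
  rw [← h1]
  apply Finset.card_bij' (fun S _ => S \ t) (fun u _ => u ∪ t)
  · intro S hS
    simp only [Finset.mem_filter, Finset.mem_powersetCard] at hS
    obtain ⟨⟨_, hcard⟩, hts⟩ := hS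
    simp only [Finset.mem_powersetCard]
    constructor
    · intro x hx
      simp only [Finset.mem_sdiff] at hx
      simp [Finset.mem_compl, hx.2]
    · rw [Finset.card_sdiff_of_subset hts, hcard]
  · intro u hu
    simp only [Finset.mem_powersetCard] at hu
    obtain ⟨husub, hucard⟩ := hu
    have hdisj : Disjoint u t := by
      rw [Finset.disjoint_left]
      intro x hx
      have := husub hx
      simpa [Finset.mem_compl] using this
    simp only [Finset.mem_filter, Finset.mem_powersetCard]
    refine ⟨⟨Finset.subset_univ _, ?_⟩, Finset.subset_union_right⟩
    rw [Finset.card_union_of_disjoint hdisj, hucard]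
    omega
  · intro S hS
    simp only [Finset.mem_filter, Finset.mem_powersetCard] at hS
    exact Finset.sdiff_union_of_subset hS.2
  · intro u hu
    simp only [Finset.mem_powersetCard] at hu
    have hdisj : Disjoint u t := by
      rw [Finset.disjoint_left]
      intro x hx
      have := hu.1 hx
      simpa [Finset.mem_compl] using this
    rw [Finset.union_sdiff_right, Finset.sdiff_eq_self_of_disjoint hdisj]

lemma sum_prod_one_add {n k : ℕ} (hk : k ≤ n) (a : Fin n → ℂ) :
    ∑ S ∈ Finset.powersetCard k (Finset.univ : Finset (Fin n)), ∏ i ∈ S, (1 + a i)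
      = ∑ j ∈ Finset.range (k + 1), ((n - j).choose (k - j) : ℂ) *
          ∑ T ∈ Finset.powersetCard j (Finset.univ : Finset (Fin n)), ∏ i ∈ T, a i := by
  have step1 : ∀ S : Finset (Fin n), ∏ i ∈ S, (1 + a i)
      = ∑ u ∈ S.powerset, ∏ i ∈ u, a i := by
    intro S
    have := Finset.prod_add a (fun _ => (1 : ℂ)) S
    simp only [Finset.prod_const_one, mul_one] at this
    rw [← this]
    exact Finset.prod_congr rfl fun i _ => add_comm _ _
  simp_rw [step1]
  rw [Finset.sum_comm' (t' := (Finset.univ : Finset (Fin n)).powerset)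
    (s' := fun u => (Finset.powersetCard k (Finset.univ : Finset (Fin n))).filter
      (fun S => u ⊆ S))]
  · have step2 : ∀ u ∈ (Finset.univ : Finset (Fin n)).powerset,
        (∑ _S ∈ (Finset.powersetCard k (Finset.univ : Finset (Fin n))).filter
          (fun S => u ⊆ S), ∏ i ∈ u, a i)
        = (if u.card ≤ k then ((n - u.card).choose (k - u.card) : ℂ) else 0) *
            ∏ i ∈ u, a i := by
      intro u _
      rw [Finset.sum_const, nsmul_eq_mul]
      congr 1
      by_cases h : u.card ≤ k
      · rw [if_pos h, card_supersets u h]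
      · rw [if_neg h]
        norm_cast
        rw [Finset.card_eq_zero, Finset.filter_eq_empty_iff]
        intro S hS hsub
        simp only [Finset.mem_powersetCard] at hS
        exact h (hS.2 ▸ Finset.card_le_card hsub)
    rw [Finset.sum_congr rfl step2, Finset.sum_powerset, Finset.card_univ, Fintype.card_fin]
    have step3 : ∀ j ∈ Finset.range (n + 1),
        (∑ u ∈ Finset.powersetCard j (Finset.univ : Finset (Fin n)),
          (if u.card ≤ k then ((n - u.card).choose (k - u.card) : ℂ) else 0) * ∏ i ∈ u, a i)
        = (if j ≤ k then ((n - j).choose (k - j) : ℂ) else 0) *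
            ∑ T ∈ Finset.powersetCard j (Finset.univ : Finset (Fin n)), ∏ i ∈ T, a i := by
      intro j _
      rw [Finset.mul_sum]
      apply Finset.sum_congr rfl
      intro u hu
      have : u.card = j := (Finset.mem_powersetCard.mp hu).2
      rw [this]
    rw [Finset.sum_congr rfl step3]
    rw [← Finset.sum_subset (Finset.range_subset_range.mpr (by omega : k + 1 ≤ n + 1))]
    · apply Finset.sum_congr rfl
      intro j hj
      rw [if_pos (Nat.lt_succ_iff.mp (Finset.mem_range.mp hj))]
    · intro j hj1 hj2
      have h1 : j ≤ n := Nat.lt_succ_iff.mp (Finset.mem_range.mp hj1)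
      have h2 : ¬ j ≤ k := fun h => hj2 (Finset.mem_range.mpr (by omega))
      rw [if_neg h2, zero_mul]
  · intro S u
    simp only [Finset.mem_powerset, Finset.mem_filter, Finset.mem_powersetCard,
      Finset.subset_univ, true_and]
    tauto

lemma deriv_eval {m : ℕ} (t : Fin m → ℂ) (z₂ : ℂ) (j : ℕ) (hj : j ≤ m) :
    ((⇑(derivative (R := ℂ)))^[j] (∏ i : Fin m, (X - C (t i)))).eval z₂
      = (j.factorial : ℂ) * ∑ T ∈ Finset.powersetCard (m - j) (Finset.univ : Finset (Fin m)),
          ∏ i ∈ T, (z₂ - t i) := by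
  have h1 := congrFun (Polynomial.factorial_smul_hasseDeriv (R := ℂ) j)
    (∏ i : Fin m, (X - C (t i)))
  rw [← h1, LinearMap.smul_apply, eval_smul, nsmul_eq_mul]
  congr 1
  rw [← Polynomial.taylor_coeff]
  have htaylor : Polynomial.taylor z₂ (∏ i : Fin m, (X - C (t i)))
      = ∏ i : Fin m, (X + C (z₂ - t i)) := by
    rw [Polynomial.taylor_apply, Polynomial.prod_comp]
    apply Finset.prod_congr rfl
    intro i _
    simp only [sub_comp, X_comp, C_comp, map_sub]
    ring
  rw [htaylor]
  have := Finset.prod_X_add_C_coeff (Finset.univ : Finset (Fin m))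
    (fun i => z₂ - t i) (k := j) (by simpa using hj)
  rw [this]
  congr 1
  simp

/-- for `Q(X) = ∏_{i=1}^m (X − t_i)` and `Q(z₂) ≠ 0`, for `0 ≤ k ≤ m`:
`Σ_{|S| = k} ∏_{i ∈ S} (t_i − z₁)/(t_i − z₂)
  = C(m,k) + Σ_{j=1}^k C(m−j, k−j)·((z₁−z₂)^j/j!)·Q^{(j)}(z₂)/Q(z₂)`. -/
theorem stmt_4 (m : ℕ) (hm : 1 ≤ m) (t : Fin m → ℂ)
    (Q : Polynomial ℂ) (hQ : Q = ∏ i : Fin m, (X - C (t i)))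
    (z₁ z₂ : ℂ) (hz : Q.eval z₂ ≠ 0) (k : ℕ) (hk : k ≤ m) :
    ∑ S ∈ Finset.powersetCard k (Finset.univ : Finset (Fin m)),
        ∏ i ∈ S, (t i - z₁) / (t i - z₂) =
      (m.choose k : ℂ) +
        ∑ j ∈ Finset.Icc 1 k,
          ((m - j).choose (k - j) : ℂ) * ((z₁ - z₂) ^ j / (j.factorial : ℂ)) *
            (((⇑(derivative (R := ℂ)))^[j] Q).eval z₂ / Q.eval z₂) := by
  have hQeval : Q.eval z₂ = ∏ i : Fin m, (z₂ - t i) := by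
    simp [hQ, eval_prod]
  have hne : ∀ i, z₂ - t i ≠ 0 := by
    rw [hQeval] at hz
    exact fun i => Finset.prod_ne_zero_iff.mp hz i (Finset.mem_univ i)
  have hne' : ∀ i, t i - z₂ ≠ 0 := fun i h => hne i (by rw [← neg_sub, h, neg_zero])
  set a : Fin m → ℂ := fun i => (z₂ - z₁) / (t i - z₂) with ha
  have hratio : ∀ i, (t i - z₁) / (t i - z₂) = 1 + a i := by
    intro i
    rw [ha, show t i - z₁ = (t i - z₂) + (z₂ - z₁) by ring, add_div, div_self (hne' i)]
  have ha' : ∀ i, a i = (z₁ - z₂) / (z₂ - t i) := by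
    intro i
    rw [ha, div_eq_div_iff (hne' i) (hne i)]
    ring
  -- LHS
  have hLHS : ∑ S ∈ Finset.powersetCard k (Finset.univ : Finset (Fin m)),
      ∏ i ∈ S, (t i - z₁) / (t i - z₂)
      = ∑ j ∈ Finset.range (k + 1), ((m - j).choose (k - j) : ℂ) *
          ∑ T ∈ Finset.powersetCard j (Finset.univ : Finset (Fin m)), ∏ i ∈ T, a i := by
    rw [← sum_prod_one_add hk a]
    apply Finset.sum_congr rfl
    intro S _
    exact Finset.prod_congr rfl fun i _ => hratio i
  rw [hLHS]
  -- RHS terms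
  have hterm : ∀ j ∈ Finset.Icc 1 k,
      ((m - j).choose (k - j) : ℂ) * ((z₁ - z₂) ^ j / (j.factorial : ℂ)) *
        (((⇑(derivative (R := ℂ)))^[j] Q).eval z₂ / Q.eval z₂)
      = ((m - j).choose (k - j) : ℂ) *
          ∑ T ∈ Finset.powersetCard j (Finset.univ : Finset (Fin m)), ∏ i ∈ T, a i := by
    intro j hj
    have hjm : j ≤ m := le_trans (Finset.mem_Icc.mp hj).2 hk
    rw [hQ, deriv_eval t z₂ j hjm, ← hQ]
    have hfac : (j.factorial : ℂ) ≠ 0 := Nat.cast_ne_zero.mpr (Nat.factorial_ne_zero j)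
    have key : (z₁ - z₂) ^ j *
        ((∑ T ∈ Finset.powersetCard (m - j) (Finset.univ : Finset (Fin m)),
          ∏ i ∈ T, (z₂ - t i)) / Q.eval z₂)
        = ∑ T ∈ Finset.powersetCard j (Finset.univ : Finset (Fin m)), ∏ i ∈ T, a i := by
      rw [Finset.sum_div, Finset.mul_sum]
      apply Finset.sum_nbij' (fun T => Finset.univ \ T) (fun T => Finset.univ \ T)
      · intro T hT
        simp only [Finset.mem_powersetCard] at hT ⊢
        refine ⟨Finset.subset_univ _, ?_⟩
        rw [Finset.card_sdiff_of_subset hT.1, Finset.card_univ, Fintype.card_fin, hT.2]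
        omega
      · intro T hT
        simp only [Finset.mem_powersetCard] at hT ⊢
        refine ⟨Finset.subset_univ _, ?_⟩
        rw [Finset.card_sdiff_of_subset hT.1, Finset.card_univ, Fintype.card_fin, hT.2]
      · intro T hT
        simp only [Finset.mem_powersetCard] at hT
        exact Finset.sdiff_sdiff_eq_self hT.1
      · intro T hT
        simp only [Finset.mem_powersetCard] at hT
        exact Finset.sdiff_sdiff_eq_self hT.1
      · intro T hT
        simp only [Finset.mem_powersetCard] at hT
        have hprod : Q.eval z₂
            = (∏ i ∈ Finset.univ \ T, (z₂ - t i)) * ∏ i ∈ T, (z₂ - t i) := by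
          rw [hQeval, ← Finset.prod_sdiff hT.1]
        have hTne : ∏ i ∈ T, (z₂ - t i) ≠ 0 :=
          Finset.prod_ne_zero_iff.mpr fun i _ => hne i
        have hcard : (Finset.univ \ T).card = j := by
          rw [Finset.card_sdiff_of_subset hT.1, Finset.card_univ, Fintype.card_fin, hT.2]
          omega
        rw [hprod, mul_comm (∏ i ∈ Finset.univ \ T, (z₂ - t i)) (∏ i ∈ T, (z₂ - t i)),
          div_mul_eq_div_div, div_self hTne,
          Finset.prod_congr rfl (fun i _ => ha' i), Finset.prod_div_distrib,
          Finset.prod_const, hcard]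
        ring
    rw [← key]
    field_simp
  rw [Finset.sum_congr rfl hterm]
  -- split range (k+1) = {0} ∪ Icc 1 k
  have hsplit : Finset.range (k + 1) = insert 0 (Finset.Icc 1 k) := by
    ext x
    simp only [Finset.mem_range, Finset.mem_insert, Finset.mem_Icc]
    omega
  rw [hsplit, Finset.sum_insert (by simp)]
  congr 1
  simp
end

section
/- Let Q ∈ ℂ[X] be a monic polynomial of degree m ≥ 1 and let z ∈ ℝ with Q(z) ≠ 0. If Q^{(k)}(z)/Q(z) ∈ ℝ for every integer 1 ≤ k ≤ m, then every coefficient of Q is real. -/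
open Polynomial

/-- if `Q` is monic of degree `m ≥ 1`, `z ∈ ℝ`, `Q(z) ≠ 0`, and
`Q^{(k)}(z)/Q(z)` is real for all `1 ≤ k ≤ m`, then all coefficients of `Q` are real. -/
theorem stmt_5 (Q : Polynomial ℂ) (m : ℕ) (hm : 1 ≤ m)
    (hmonic : Q.Monic) (hdeg : Q.natDegree = m)
    (z : ℝ) (hz : Q.eval (z : ℂ) ≠ 0)
    (hreal : ∀ k : ℕ, 1 ≤ k → k ≤ m →
      ∃ r : ℝ, ((⇑(derivative (R := ℂ)))^[k] Q).eval (z : ℂ) / Q.eval (z : ℂ) = (r : ℂ)) :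
    ∀ i : ℕ, ∃ r : ℝ, Q.coeff i = (r : ℂ) := by
  have hc : Q.coeff m = 1 := by rw [← hdeg]; exact hmonic.coeff_natDegree
  have hH : hasseDeriv m Q = 1 := by
    ext n
    rw [hasseDeriv_coeff]
    rcases Nat.eq_zero_or_pos n with rfl | hn
    · simp [hc]
    · have h0 : Q.coeff (n + m) = 0 := coeff_eq_zero_of_natDegree_lt (by omega)
      have hn1 : n ≠ 0 := by omega
      simp [h0, coeff_one, hn1]
  have hDm : ((⇑(derivative (R := ℂ)))^[m] Q).eval (z : ℂ) = (Nat.factorial m : ℂ) := by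
    rw [← factorial_smul_hasseDeriv]
    simp [hH]
  -- Q(z) is real
  have hQz : ∃ r : ℝ, Q.eval (z : ℂ) = (r : ℂ) := by
    obtain ⟨r, hr⟩ := hreal m hm le_rfl
    rw [hDm] at hr
    have hfac : (Nat.factorial m : ℂ) ≠ 0 := Nat.cast_ne_zero.mpr m.factorial_ne_zero
    have hr0 : (r : ℂ) ≠ 0 := by
      intro h
      rw [h, _root_.div_eq_zero_iff] at hr
      rcases hr with h1 | h2
      · exact hfac h1
      · exact hz h2
    refine ⟨Nat.factorial m / r, ?_⟩
    have : (r : ℂ) * Q.eval (z : ℂ) = (Nat.factorial m : ℂ) := by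
      field_simp at hr
      linear_combination -hr
    push_cast
    rw [eq_div_iff (by exact_mod_cast fun h => hr0 (by exact_mod_cast h))]
    linear_combination this
  -- all derivatives real
  have hder : ∀ k, ∃ r : ℝ, ((⇑(derivative (R := ℂ)))^[k] Q).eval (z : ℂ) = (r : ℂ) := by
    intro k
    rcases Nat.eq_zero_or_pos k with rfl | hk
    · simpa using hQz
    rcases le_or_gt k m with hkm | hkm
    · obtain ⟨r, hr⟩ := hreal k hk hkm
      obtain ⟨s, hs⟩ := hQz
      refine ⟨r * s, ?_⟩
      rw [div_eq_iff hz] at hr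
      rw [hr, hs]; push_cast; ring
    · have : (⇑(derivative (R := ℂ)))^[k] Q = 0 := by
        apply iterate_derivative_eq_zero
        rw [hdeg]; exact_mod_cast hkm
      simp [this]; exact ⟨0, by simp⟩
  -- all hasse derivatives at z real
  have hhasse : ∀ k, ∃ r : ℝ, (hasseDeriv k Q).eval (z : ℂ) = (r : ℂ) := by
    intro k
    obtain ⟨r, hr⟩ := hder k
    refine ⟨r / Nat.factorial k, ?_⟩
    have h1 : ((Nat.factorial k : ℂ)) * (hasseDeriv k Q).eval (z : ℂ) = (r : ℂ) := by
      rw [← hr, ← factorial_smul_hasseDeriv]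
      simp [Polynomial.smul_eval]
    have hfac : (Nat.factorial k : ℂ) ≠ 0 := Nat.cast_ne_zero.mpr k.factorial_ne_zero
    push_cast
    field_simp
    linear_combination h1
  -- conjugate polynomial equals Q
  have hmap : Q.map (starRingEnd ℂ) = Q := by
    apply taylor_injective (z : ℂ)
    have hcomm : taylor (z : ℂ) (Q.map (starRingEnd ℂ)) = (taylor (z : ℂ) Q).map (starRingEnd ℂ) := by
      simp only [taylor_apply, Polynomial.map_comp, Polynomial.map_add, map_X, map_C,
        Complex.conj_ofReal]
    rw [hcomm]
    ext k
    rw [coeff_map, taylor_coeff]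
    obtain ⟨r, hr⟩ := hhasse k
    rw [hr, Complex.conj_ofReal]
  intro i
  have := congrArg (fun p => Polynomial.coeff p i) hmap
  simp only [coeff_map] at this
  exact Complex.conj_eq_iff_real.mp this
end

section
/- Let q ∈ ℂ with |q| = 1 and q not a root of unity, and let a, b, m ∈ ℕ with m ≤ a and m ≤ b. Then q^{bm − m² + m}·Σ_{i=0}^m q^{−(a+b+2−2m)i}·C_q(b−m+i, i)·C_q(a−i, m−i) = C_q(a+b+1−m, m). -/
/-- The quantum integer `[k]_q = (q^k − q^{−k})/(q − q^{−1})`. -/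
noncomputable def qint (q : ℂ) (k : ℤ) : ℂ := (q ^ k - q ^ (-k)) / (q - q⁻¹)

/-- The quantum binomial coefficient `C_q(n,k) = ∏_{j=1}^k [n−k+j]_q / [j]_q`. -/
noncomputable def qbinom (q : ℂ) (n : ℤ) (k : ℕ) : ℂ :=
  ∏ j ∈ Finset.Icc 1 k, qint q (n - k + j) / qint q j

/-!
With `r = b - m`, `t = a - m + 1` and `j = m - i` the identity is the q-Vandermonde convolution
`∑_{i+j=m} q^{(r+1)j - ti} C_q(r+i, i) C_q(t-1+j, j) = C_q(r+t+m, m)`, valid for every `r : ℤ`.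
It follows by induction on `m` and then on `t` from the q-Pascal rule
`C_q(n+1, k+1) = q^{-(k+1)} C_q(n, k+1) + q^{n-k} C_q(n, k)`, which is where `[k+1]_q ≠ 0`,
i.e. `q` not being a root of unity, is needed.
-/

open Finset

variable {q : ℂ}

theorem sub_inv_ne_zero {K : Type*} [Field K] {x : K} (hx : x ≠ 0) (hx2 : x ^ 2 ≠ 1) :
    x - x⁻¹ ≠ 0 := by
  intro h
  apply hx2
  field_simp at h
  linear_combination h

theorem qint_natCast_ne_zero (hq : q ≠ 0) (hroot : ∀ n : ℕ, 0 < n → q ^ n ≠ 1) {k : ℕ}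
    (hk : 0 < k) : qint q k ≠ 0 := by
  rw [qint, zpow_neg, zpow_natCast]
  refine div_ne_zero (sub_inv_ne_zero (pow_ne_zero k hq) ?_) (sub_inv_ne_zero hq (hroot 2 two_pos))
  rw [← pow_mul]
  exact hroot _ (by omega)

theorem qint_zero : qint q 0 = 0 := by simp [qint]

theorem qint_add (hq : q ≠ 0) (c d : ℤ) :
    qint q (c + d) = q ^ c * qint q d + q ^ (-d) * qint q c := by
  simp only [qint, neg_add, zpow_add₀ hq]
  ring

noncomputable def qDescFactorial (q : ℂ) (n : ℤ) (k : ℕ) : ℂ :=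
  ∏ j ∈ range k, qint q (n - k + 1 + j)

noncomputable def qFactorial (q : ℂ) (k : ℕ) : ℂ :=
  ∏ j ∈ range k, qint q (j + 1)

theorem qDescFactorial_succ (n : ℤ) (k : ℕ) :
    qDescFactorial q n (k + 1) = qDescFactorial q (n - 1) k * qint q n := by
  simp only [qDescFactorial, prod_range_succ]
  push_cast
  ring_nf

theorem qDescFactorial_succ' (n : ℤ) (k : ℕ) :
    qDescFactorial q n (k + 1) = qDescFactorial q n k * qint q (n - k) := by
  simp only [qDescFactorial, prod_range_succ']
  push_cast
  ring_nf

theorem qFactorial_succ (k : ℕ) : qFactorial q (k + 1) = qFactorial q k * qint q (k + 1) := by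
  simp only [qFactorial, prod_range_succ]

theorem qbinom_eq_div (n : ℤ) (k : ℕ) : qbinom q n k = qDescFactorial q n k / qFactorial q k := by
  rw [qbinom, prod_div_distrib, ← Ico_add_one_right_eq_Icc, prod_Ico_eq_prod_range,
    prod_Ico_eq_prod_range, qDescFactorial, qFactorial]
  push_cast
  ring_nf

theorem qbinom_zero_right (n : ℤ) : qbinom q n 0 = 1 := by simp [qbinom]

theorem qbinom_succ (n : ℤ) (k : ℕ) :
    qbinom q n (k + 1) = qint q n / qint q (k + 1) * qbinom q (n - 1) k := by
  rw [qbinom_eq_div, qbinom_eq_div, qDescFactorial_succ, qFactorial_succ, mul_div_mul_comm,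
    mul_comm]

theorem qbinom_succ' (n : ℤ) (k : ℕ) :
    qbinom q n (k + 1) = qint q (n - k) / qint q (k + 1) * qbinom q n k := by
  rw [qbinom_eq_div, qbinom_eq_div, qDescFactorial_succ', qFactorial_succ, mul_div_mul_comm,
    mul_comm]

theorem qbinom_self_succ (k : ℕ) : qbinom q k (k + 1) = 0 := by
  rw [qbinom_succ', sub_self, qint_zero, zero_div, zero_mul]

theorem qbinom_succ_succ (hq : q ≠ 0) (n : ℤ) {k : ℕ} (hk : qint q (k + 1) ≠ 0) :
    qbinom q (n + 1) (k + 1) =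
      q ^ (-(k + 1 : ℤ)) * qbinom q n (k + 1) + q ^ (n - k) * qbinom q n k := by
  have hsplit : qint q (n + 1) =
      q ^ (n - k) * qint q (k + 1) + q ^ (-(k + 1 : ℤ)) * qint q (n - k) := by
    rw [← qint_add hq]; ring_nf
  rw [qbinom_succ, qbinom_succ', add_sub_cancel_right, hsplit]
  field_simp
  ring

noncomputable def qVandermondeTerm (q : ℂ) (r : ℤ) (t i j : ℕ) : ℂ :=
  q ^ ((r + 1) * j - t * i) * qbinom q (r + i) i * qbinom q (t - 1 + j) j

theorem qVandermondeTerm_succ_succ (hq : q ≠ 0) (r : ℤ) (t i j : ℕ) (hj : qint q (j + 1) ≠ 0) :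
    qVandermondeTerm q r (t + 1) i (j + 1) =
      q ^ (-(i + j + 1 : ℤ)) * qVandermondeTerm q r t i (j + 1) +
        q ^ (r + t + 1) * qVandermondeTerm q r (t + 1) i j := by
  have e1 : q ^ ((r + 1) * (j + 1) - (t + 1) * i) * q ^ (-(j + 1 : ℤ)) =
      q ^ (-(i + j + 1 : ℤ)) * q ^ ((r + 1) * (j + 1) - t * i) := by
    rw [← zpow_add₀ hq, ← zpow_add₀ hq]; ring_nf
  have e2 : q ^ ((r + 1) * (j + 1) - (t + 1) * i) * q ^ (t + j - j : ℤ) =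
      q ^ (r + t + 1) * q ^ ((r + 1) * j - (t + 1) * i) := by
    rw [← zpow_add₀ hq, ← zpow_add₀ hq]; ring_nf
  simp only [qVandermondeTerm]
  push_cast
  rw [show (t + 1 - 1 + (j + 1) : ℤ) = t + j + 1 by ring,
    show (t - 1 + (j + 1) : ℤ) = t + j by ring, show (t + 1 - 1 + j : ℤ) = t + j by ring,
    qbinom_succ_succ hq _ hj]
  linear_combination qbinom q (r + i) i * qbinom q (t + j) (j + 1) * e1 +
    qbinom q (r + i) i * qbinom q (t + j) j * e2

theorem sum_antidiagonal_qVandermondeTerm (hq : q ≠ 0) (hqint : ∀ k : ℕ, qint q (k + 1) ≠ 0)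
    (r : ℤ) (t m : ℕ) :
    ∑ p ∈ antidiagonal m, qVandermondeTerm q r t p.1 p.2 = qbinom q (r + t + m) m := by
  induction m generalizing t with
  | zero => simp [qVandermondeTerm, qbinom_zero_right]
  | succ M ihM =>
    induction t with
    | zero =>
      simp [qVandermondeTerm, Nat.sum_antidiagonal_succ', qbinom_zero_right, qbinom_self_succ]
    | succ T ihT =>
      have hterm : ∀ p ∈ antidiagonal M, qVandermondeTerm q r (T + 1) p.1 (p.2 + 1) =
          q ^ (-(M + 1 : ℤ)) * qVandermondeTerm q r T p.1 (p.2 + 1) +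
            q ^ (r + T + 1) * qVandermondeTerm q r (T + 1) p.1 p.2 := fun p hp => by
        rw [qVandermondeTerm_succ_succ hq r T p.1 p.2 (hqint p.2), ← mem_antidiagonal.mp hp]
        push_cast; ring_nf
      have hlast : qVandermondeTerm q r (T + 1) (M + 1) 0 =
          q ^ (-(M + 1 : ℤ)) * qVandermondeTerm q r T (M + 1) 0 := by
        simp only [qVandermondeTerm, qbinom_zero_right, mul_one, ← mul_assoc, ← zpow_add₀ hq]
        push_cast; ring_nf
      rw [Nat.sum_antidiagonal_succ'] at ihT ⊢
      rw [sum_congr rfl hterm, sum_add_distrib, ← mul_sum, ← mul_sum, ihM, hlast]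
      have hpascal := qbinom_succ_succ hq (r + T + M + 1) (hqint M)
      push_cast at ihT hpascal ⊢
      rw [show r + T + M + 1 - M = r + T + 1 by ring] at hpascal
      rw [show r + T + (M + 1 : ℤ) = r + T + M + 1 by ring] at ihT
      rw [show r + (T + 1) + (M + 1 : ℤ) = r + T + M + 1 + 1 by ring,
        show r + (T + 1) + (M : ℤ) = r + T + M + 1 by ring]
      linear_combination q ^ (-(M + 1 : ℤ)) * ihT - hpascal

theorem stmt_8_general (q : ℂ) (hq : ‖q‖ = 1) (hroot : ∀ n : ℕ, 0 < n → q ^ n ≠ 1)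
    (a b m : ℕ) (hma : m ≤ a) :
    q ^ ((b : ℤ) * m - (m : ℤ) ^ 2 + m) *
        ∑ i ∈ Finset.range (m + 1),
          q ^ (-(((a : ℤ) + b + 2 - 2 * m) * i)) *
            qbinom q ((b : ℤ) - m + i) i * qbinom q ((a : ℤ) - i) (m - i) =
      qbinom q ((a : ℤ) + b + 1 - m) m := by
  have hq0 : q ≠ 0 := norm_ne_zero_iff.mp (hq ▸ one_ne_zero)
  have hqint (k : ℕ) : qint q (k + 1) ≠ 0 := by
    exact_mod_cast qint_natCast_ne_zero hq0 hroot k.succ_pos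
  calc _ = ∑ i ∈ range (m + 1), qVandermondeTerm q (b - m) (a - m + 1) i (m - i) := by
        rw [mul_sum]
        refine sum_congr rfl fun i hi => ?_
        have hi : i ≤ m := mem_range_succ_iff.mp hi
        simp only [qVandermondeTerm, ← mul_assoc, ← zpow_add₀ hq0]
        push_cast [Nat.cast_sub hi, Nat.cast_sub hma]
        ring_nf
    _ = _ := by
        rw [← Nat.sum_antidiagonal_eq_sum_range_succ (qVandermondeTerm q (b - m) (a - m + 1)),
          sum_antidiagonal_qVandermondeTerm hq0 hqint]
        push_cast [Nat.cast_sub hma]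
        ring_nf

/-- the quantum Vandermonde-type identity
`q^{bm−m²+m}·Σ_{i=0}^m q^{−(a+b+2−2m)i}·C_q(b−m+i,i)·C_q(a−i,m−i) = C_q(a+b+1−m,m)`. -/
theorem stmt_8 (q : ℂ) (hq : ‖q‖ = 1) (hroot : ∀ n : ℕ, 0 < n → q ^ n ≠ 1)
    (a b m : ℕ) (hma : m ≤ a) (hmb : m ≤ b) :
    q ^ ((b : ℤ) * m - (m : ℤ) ^ 2 + m) *
        ∑ i ∈ Finset.range (m + 1),
          q ^ (-(((a : ℤ) + b + 2 - 2 * m) * i)) *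
            qbinom q ((b : ℤ) - m + i) i * qbinom q ((a : ℤ) - i) (m - i) =
      qbinom q ((a : ℤ) + b + 1 - m) m :=
  stmt_8_general q hq hroot a b m hma
end

section
/- Let λ_1 > λ_2 > 0 > λ_3 be reals with λ_1 ∉ ℤ and λ_2 ∉ ℤ, and for k ∈ ℕ set S(k) = Σ_{i_1+i_2+i_3 = k, i_j ≥ 0} f_{λ_1}(i_1)·f_{λ_2}(i_2)·f_{λ_3}(i_3). Then: (i) if 0 ≤ k ≤ ⌈λ_2⌉, S(k) = ⌈(k+1)/2⌉; (ii) if ⌈λ_2⌉ < k ≤ ⌈λ_1⌉ and k − ⌈λ_2⌉ is even, S(k) = ⌈(k+1)/2⌉; (iii) if ⌈λ_2⌉ < k ≤ ⌈λ_1⌉ and k − ⌈λ_2⌉ is odd, S(k) = ⌈(k+1)/2⌉ − (k − ⌊λ_2⌋). -/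
open scoped Classical

/-!
For `k ≤ ⌈λ₁⌉` every factor `f_{λ₁}(i₁)` occurring in `S(k)` equals `1`, and summing
`f_{λ₃}(i₃) = (-1)^{i₃}` over `i₁ + i₃ = m` gives `1` or `0` according to the parity of `m`.
Hence `S(k) = ∑_{i₂ ≤ k, k - i₂ even} f_{λ₂}(i₂)`, and passing from `k` to `k + 2` adds the
single term `f_{λ₂}(k + 2)`, which is `1` up to `⌈λ₂⌉` and then alternates; a two-step
induction gives the closed form.
-/

open Finset

def stepSign (c i : ℕ) : ℤ := if i ≤ c then 1 else (-1) ^ (i + c)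

lemma fsig_natCast_of_neg {lam : ℝ} (hlam : lam < 0) (i : ℕ) : fsig lam i = (-1) ^ i := by
  simp [fsig, hlam]

lemma fsig_natCast_of_nonneg {lam : ℝ} (hlam : 0 ≤ lam) (i : ℕ) :
    fsig lam i = stepSign ⌈lam⌉.toNat i := by
  have hceil : ⌈lam⌉ ≤ ⌊lam⌋ + 1 := Int.ceil_le_floor_add_one lam
  have hfloor : ⌊lam⌋ ≤ ⌈lam⌉ := Int.floor_le_ceil lam
  have h0 : 0 ≤ ⌊lam⌋ := Int.floor_nonneg.mpr hlam
  rw [fsig, if_neg (by omega), if_neg hlam.not_gt, stepSign]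
  split_ifs with h₁ h₂ h₂
  · rfl
  · omega
  · rw [show ((i : ℤ) + ⌈lam⌉).toNat = 2 * i by omega, pow_mul]
    norm_num
  · congr 1
    omega

lemma sum_antidiagonalTuple_three {M : Type*} [AddCommMonoid M] (k : ℕ) (F : ℕ → ℕ → ℕ → M) :
    ∑ x ∈ Nat.antidiagonalTuple 3 k, F (x 0) (x 1) (x 2) =
      ∑ p ∈ antidiagonal k, ∑ q ∈ antidiagonal p.2, F q.1 p.1 q.2 := by
  rw [Finset.sum_sigma']
  refine Finset.sum_nbij' (fun x => ⟨(x 1, x 0 + x 2), (x 0, x 2)⟩)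
    (fun p => ![p.2.1, p.1.1, p.2.2]) ?_ ?_ ?_ ?_ (fun _ _ => rfl)
  · intro x hx
    simp only [Nat.mem_antidiagonalTuple, Fin.sum_univ_three] at hx
    simp only [mem_sigma, HasAntidiagonal.mem_antidiagonal, and_true]
    omega
  · intro p hp
    simp only [mem_sigma, HasAntidiagonal.mem_antidiagonal] at hp
    simp only [Nat.mem_antidiagonalTuple, Fin.sum_univ_three, Matrix.cons_val_zero,
      Matrix.cons_val_one, Matrix.cons_val]
    omega
  · intro x _
    ext i
    fin_cases i <;> rfl
  · intro p hp
    simp only [mem_sigma, HasAntidiagonal.mem_antidiagonal] at hp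
    ext <;> simp [hp.2.symm]

lemma sum_antidiagonal_neg_one_pow (m : ℕ) :
    ∑ q ∈ antidiagonal m, (-1 : ℤ) ^ q.2 = if Even m then 1 else 0 := by
  induction m with
  | zero => simp
  | succ m ih =>
    rw [Nat.sum_antidiagonal_succ]
    simp only [ih, Nat.even_add_one]
    split_ifs with h
    · simp [pow_succ, h.neg_one_pow]
    · simp [pow_succ, (Nat.not_even_iff_odd.mp h).neg_one_pow]

lemma sum_antidiagonal_ite_even_add_two {M : Type*} [AddCommMonoid M] (g : ℕ → M) (k : ℕ) :
    ∑ p ∈ antidiagonal (k + 2), (if Even p.2 then g p.1 else 0) =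
      g (k + 2) + ∑ p ∈ antidiagonal k, (if Even p.2 then g p.1 else 0) := by
  rw [Nat.sum_antidiagonal_succ', Nat.sum_antidiagonal_succ']
  simp [Nat.even_add_one, add_assoc]

lemma sum_antidiagonal_ite_even_stepSign (c k : ℕ) :
    ∑ p ∈ antidiagonal k, (if Even p.2 then stepSign c p.1 else 0) =
      ((k : ℤ) + 2) / 2 - if (c : ℤ) < k ∧ Odd ((k : ℤ) - c) then (k : ℤ) - c + 1 else 0 := by
  induction k using Nat.twoStepInduction with
  | zero => rw [if_neg (by omega)]; simp [stepSign]
  | one =>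
    rcases Nat.eq_zero_or_pos c with rfl | hc
    · simp [Nat.sum_antidiagonal_succ', stepSign]
    · rw [if_neg (by omega)]
      simp [Nat.sum_antidiagonal_succ', stepSign, hc.ne']
  | more k ih _ =>
    rw [sum_antidiagonal_ite_even_add_two, ih, stepSign, neg_one_pow_eq_ite]
    simp only [Int.odd_iff, Nat.even_iff]
    push_cast
    split_ifs <;> omega

lemma sum_antidiagonalTuple_fsig_eq {lam₁ lam₂ lam₃ : ℝ} (h₁ : 0 ≤ lam₁) (h₃ : lam₃ < 0)
    {k : ℕ} (hk : (k : ℤ) ≤ ⌈lam₁⌉) :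
    ∑ x ∈ Nat.antidiagonalTuple 3 k, fsig lam₁ (x 0) * fsig lam₂ (x 1) * fsig lam₃ (x 2) =
      ∑ p ∈ antidiagonal k, if Even p.2 then fsig lam₂ p.1 else 0 := by
  rw [sum_antidiagonalTuple_three k fun a b c => fsig lam₁ a * fsig lam₂ b * fsig lam₃ c]
  refine sum_congr rfl fun p hp => ?_
  have hterm : ∀ q ∈ antidiagonal p.2,
      fsig lam₁ q.1 * fsig lam₂ p.1 * fsig lam₃ q.2 = fsig lam₂ p.1 * (-1) ^ q.2 := by
    intro q hq
    rw [HasAntidiagonal.mem_antidiagonal] at hp hq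
    rw [fsig_natCast_of_neg h₃, fsig_natCast_of_nonneg h₁, stepSign, if_pos (by omega), one_mul]
  rw [sum_congr rfl hterm, ← mul_sum, sum_antidiagonal_neg_one_pow, mul_ite, mul_one, mul_zero]

theorem stmt_10_general (lam₁ lam₂ lam₃ : ℝ) (h12 : lam₁ > lam₂) (h2 : lam₂ > 0) (h3 : 0 > lam₃)
    (hl2 : ∀ n : ℤ, lam₂ ≠ n)
    (S : ℕ → ℤ)
    (hS : ∀ k : ℕ, S k = ∑ x ∈ Finset.Nat.antidiagonalTuple 3 k,
      fsig lam₁ (x 0) * fsig lam₂ (x 1) * fsig lam₃ (x 2)) (k : ℕ) :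
    ((k : ℤ) ≤ ⌈lam₂⌉ → S k = ((k : ℤ) + 2) / 2) ∧
    (⌈lam₂⌉ < (k : ℤ) → (k : ℤ) ≤ ⌈lam₁⌉ → Even ((k : ℤ) - ⌈lam₂⌉) →
      S k = ((k : ℤ) + 2) / 2) ∧
    (⌈lam₂⌉ < (k : ℤ) → (k : ℤ) ≤ ⌈lam₁⌉ → Odd ((k : ℤ) - ⌈lam₂⌉) →
      S k = ((k : ℤ) + 2) / 2 - ((k : ℤ) - ⌊lam₂⌋)) := by
  obtain ⟨c, hc⟩ := Int.eq_ofNat_of_zero_le (Int.ceil_nonneg h2.le)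
  have hfloor : ⌊lam₂⌋ = c - 1 := by
    have := (Int.ceil_eq_floor_add_one_iff_notMem lam₂).mpr fun ⟨n, hn⟩ => hl2 n hn.symm
    omega
  have hceil : ⌈lam₂⌉ ≤ ⌈lam₁⌉ := Int.ceil_mono h12.le
  have hSk (hk : (k : ℤ) ≤ ⌈lam₁⌉) :
      S k = ((k : ℤ) + 2) / 2 - if (c : ℤ) < k ∧ Odd ((k : ℤ) - c) then (k : ℤ) - c + 1 else 0 := by
    simp_rw [hS, sum_antidiagonalTuple_fsig_eq (h2.trans h12).le h3.lt hk,
      fsig_natCast_of_nonneg h2.le, hc, Int.toNat_natCast, sum_antidiagonal_ite_even_stepSign]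
  rw [hc] at hceil ⊢
  refine ⟨fun hk => ?_, fun hk hk₁ hev => ?_, fun hk hk₁ hodd => ?_⟩
  · rw [hSk (by omega), if_neg (by omega), sub_zero]
  · rw [hSk hk₁, if_neg fun h => Int.not_odd_iff_even.mpr hev h.2, sub_zero]
  · rw [hSk hk₁, if_pos ⟨hk, hodd⟩, hfloor]
    ring

/-- the value of `S(k) = Σ_{i₁+i₂+i₃=k} f_{λ₁}(i₁)f_{λ₂}(i₂)f_{λ₃}(i₃)`
for `λ₁ > λ₂ > 0 > λ₃` in the range `0 ≤ k ≤ ⌈λ₁⌉`. -/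
theorem stmt_10 (lam₁ lam₂ lam₃ : ℝ) (h12 : lam₁ > lam₂) (h2 : lam₂ > 0) (h3 : 0 > lam₃)
    (hl1 : ∀ n : ℤ, lam₁ ≠ n) (hl2 : ∀ n : ℤ, lam₂ ≠ n)
    (S : ℕ → ℤ)
    (hS : ∀ k : ℕ, S k = ∑ x ∈ Finset.Nat.antidiagonalTuple 3 k,
      fsig lam₁ (x 0) * fsig lam₂ (x 1) * fsig lam₃ (x 2)) (k : ℕ) :
    ((k : ℤ) ≤ ⌈lam₂⌉ → S k = ((k : ℤ) + 2) / 2) ∧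
    (⌈lam₂⌉ < (k : ℤ) → (k : ℤ) ≤ ⌈lam₁⌉ → Even ((k : ℤ) - ⌈lam₂⌉) →
      S k = ((k : ℤ) + 2) / 2) ∧
    (⌈lam₂⌉ < (k : ℤ) → (k : ℤ) ≤ ⌈lam₁⌉ → Odd ((k : ℤ) - ⌈lam₂⌉) →
      S k = ((k : ℤ) + 2) / 2 - ((k : ℤ) - ⌊lam₂⌋)) :=
  stmt_10_general lam₁ lam₂ lam₃ h12 h2 h3 hl2 S hS k
end

section
/- Let λ_1 ≥ λ_2 ≥ λ_3 > 0 be reals, none an integer. Define f₂(x, j) = 0 for integers j ≤ ⌈x⌉, and f₂(x, j) = (j − ⌈x⌉ − ⌊(j−⌈x⌉−1)/2⌋)·(1 + ⌊(j−⌈x⌉−1)/2⌋) for j ≥ ⌈x⌉ + 1. Then for every integer 0 ≤ k ≤ ⌈λ_2⌉ + ⌈λ_3⌉ + 1: Σ_{i_1+i_2+i_3 = k, i_j ≥ 0} f_{λ_1}(i_1)·f_{λ_2}(i_2)·f_{λ_3}(i_3) = C(k+2, 2) − 2f₂(λ_1, k) − 2f₂(λ_2, k) − 2f₂(λ_3,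 k), where C(·,·) is the binomial coefficient. -/
open scoped Classical

/-- The counting function `f₂` of the paper (Lemma E.6). -/
noncomputable def fTwo (x : ℝ) (j : ℤ) : ℤ :=
  if j ≤ ⌈x⌉ then 0
  else (j - ⌈x⌉ - (j - ⌈x⌉ - 1) / 2) * (1 + (j - ⌈x⌉ - 1) / 2)

/-! ### Auxiliary definitions and lemmas -/

/-- Integer-parameter version of `fsig` for positive nonintegral `lam` with `c = ⌈lam⌉`. -/
def Gg (c v : ℕ) : ℤ := if v < c then 1 else (-1)^(v+c)

/-- `Gg` minus its "generic" value 1. -/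
def Hh (c v : ℕ) : ℤ := Gg c v - 1

/-- Recursively defined counting function, equal to `fTwo` (see `Fn_closed`, `fTwo_eq`). -/
def Fn (c : ℕ) : ℕ → ℕ
  | 0 => 0
  | (k+1) => Fn c k + (k+2-c)/2

lemma Gg_eq (c v : ℕ) : Gg c v = Hh c v + 1 := by unfold Hh; ring

lemma Hh_eq (c v : ℕ) : Hh c v = if c < v ∧ (v+c) % 2 = 1 then -2 else 0 := by
  unfold Hh Gg
  by_cases h : v < c
  · rw [if_pos h, if_neg (by omega : ¬(c < v ∧ (v+c)%2 = 1))]; ring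
  · rw [if_neg h]
    rcases Nat.even_or_odd (v+c) with he | ho
    · rw [Even.neg_one_pow he, if_neg]
      · ring
      · rw [Nat.even_iff] at he; omega
    · rw [Odd.neg_one_pow ho, if_pos]
      · ring
      · rw [Nat.odd_iff] at ho
        exact ⟨by omega, ho⟩

lemma Hh_mul (a b u v : ℕ) (h : u + v ≤ a + b + 1) : Hh a u * Hh b v = 0 := by
  rw [Hh_eq, Hh_eq]
  split_ifs with h1 h2 <;> first
  | (exfalso; omega)
  | simp

lemma sumH (c : ℕ) : ∀ n : ℕ, ∑ v ∈ Finset.range (n+1), Hh c v = -2 * (((n+1-c)/2 : ℕ) : ℤ) := by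
  intro n
  induction n with
  | zero => rw [Finset.sum_range_one, Hh_eq, if_neg (by omega)]; omega
  | succ n ih =>
    rw [Finset.sum_range_succ, ih, Hh_eq]
    split_ifs with h <;> omega

lemma sumT (c : ℕ) : ∀ k : ℕ, ∑ v ∈ Finset.range (k+1), ((k+1-v : ℕ) : ℤ) * Hh c v = -2 * (Fn c k : ℤ) := by
  intro k
  induction k with
  | zero =>
    rw [Finset.sum_range_one, Hh_eq, if_neg (by omega)]
    simp [Fn]
  | succ k ih =>
    have e1 : ∀ v ∈ Finset.range (k+2), ((k+1+1-v : ℕ) : ℤ) * Hh c v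
        = ((k+1-v : ℕ) : ℤ) * Hh c v + Hh c v := by
      intro v hv
      rw [Finset.mem_range] at hv
      by_cases hvk : v ≤ k
      · have : (k+1+1-v : ℕ) = (k+1-v) + 1 := by omega
        rw [this]; push_cast; ring
      · have hv1 : v = k+1 := by omega
        subst hv1
        have h2 : (k+1+1-(k+1) : ℕ) = 1 := by omega
        have h3 : (k+1-(k+1) : ℕ) = 0 := by omega
        rw [h2, h3]; push_cast; ring
    rw [Finset.sum_congr rfl e1, Finset.sum_add_distrib]
    rw [Finset.sum_range_succ (fun v => ((k+1-v : ℕ) : ℤ) * Hh c v)]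
    have h3 : (k+1-(k+1) : ℕ) = 0 := by omega
    rw [h3, sumH c (k+1), ih]
    show -2 * (Fn c k : ℤ) + (0:ℤ) * Hh c (k+1) + -2 * ((k+2-c)/2 : ℕ) = -2 * (Fn c (k+1) : ℤ)
    rw [show Fn c (k+1) = Fn c k + (k+2-c)/2 from rfl]
    push_cast
    ring

lemma Fn_closed (c : ℕ) : ∀ k : ℕ, Fn c k = if k ≤ c then 0 else (k-c-(k-c-1)/2)*(1+(k-c-1)/2) := by
  intro k
  induction k with
  | zero => simp [Fn]
  | succ k ih =>
    rw [show Fn c (k+1) = Fn c k + (k+2-c)/2 from rfl, ih]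
    rcases lt_trichotomy k c with h | h | h
    · rw [if_pos (by omega), if_pos (by omega)]
      omega
    · subst h
      rw [if_pos (le_refl k), if_neg (by omega)]
      rw [show k+1-k = 1 from by omega]
      rw [show k+2-k = 2 from by omega]
    · rw [if_neg (by omega), if_neg (by omega)]
      obtain ⟨a, ha⟩ : ∃ a : ℕ, k = c+2*a+1 ∨ k = c+2*a+2 := ⟨(k-c-1)/2, by omega⟩
      rcases ha with ha | ha <;> subst ha
      · rw [show c+2*a+1+1-c = 2*a+2 from by omega,
            show c+2*a+1-c = 2*a+1 from by omega,
            show (2*a+2-1)/2 = a from by omega,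
            show (2*a+1-1)/2 = a from by omega,
            show c+2*a+1+2-c = 2*a+3 from by omega,
            show (2*a+3)/2 = a+1 from by omega,
            show 2*a+2-a = a+2 from by omega,
            show 2*a+1-a = a+1 from by omega]
        ring
      · rw [show c+2*a+2+1-c = 2*a+3 from by omega,
            show c+2*a+2-c = 2*a+2 from by omega,
            show (2*a+3-1)/2 = a+1 from by omega,
            show (2*a+2-1)/2 = a from by omega,
            show c+2*a+2+2-c = 2*a+4 from by omega,
            show (2*a+4)/2 = a+2 from by omega,
            show 2*a+3-(a+1) = a+2 from by omega,
            show 2*a+2-a = a+2 from by omega]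
        ring

lemma fTwo_eq (lam : ℝ) (c : ℕ) (hc : ⌈lam⌉ = (c:ℤ)) (k : ℕ) :
    fTwo lam (k:ℤ) = (Fn c k : ℤ) := by
  unfold fTwo
  rw [hc, Fn_closed]
  by_cases h : k ≤ c
  · rw [if_pos (by exact_mod_cast h), if_pos h]; simp
  · rw [if_neg (by exact_mod_cast h), if_neg h]
    generalize hd : ((k:ℤ) - (c:ℤ) - 1)/2 = d
    generalize he : (k-c-1)/2 = e
    push_cast
    have h1 : ((k - c - e : ℕ) : ℤ) = (k:ℤ) - c - e := by omega
    rw [h1, show (e:ℤ) = d from by omega]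

lemma fsig_eq (lam : ℝ) (c : ℕ) (hpos : 0 < lam) (hni : ∀ n : ℤ, lam ≠ n)
    (hc : ⌈lam⌉ = (c:ℤ)) (v : ℕ) : fsig lam (v:ℤ) = Gg c v := by
  have hfl : (⌊lam⌋ : ℝ) < lam := lt_of_le_of_ne (Int.floor_le lam) (fun h => hni ⌊lam⌋ h.symm)
  have hcf : ⌈lam⌉ = ⌊lam⌋ + 1 := by
    have h1 : ⌈lam⌉ ≤ ⌊lam⌋ + 1 := by
      rw [Int.ceil_le]; push_cast; exact (Int.lt_floor_add_one lam).le
    have h2 : ⌊lam⌋ < ⌈lam⌉ := by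
      have : (⌊lam⌋ : ℝ) < (⌈lam⌉ : ℝ) := lt_of_lt_of_le hfl (Int.le_ceil lam)
      exact_mod_cast this
    omega
  have hc1 : 1 ≤ c := by
    have : 0 < ⌈lam⌉ := Int.ceil_pos.mpr hpos
    omega
  unfold fsig Gg
  rw [if_neg (by omega : ¬((v:ℤ) < 0)), if_neg (not_lt.mpr hpos.le)]
  by_cases hv : v < c
  · rw [if_pos (by omega : (v:ℤ) ≤ ⌊lam⌋), if_pos hv]
  · rw [if_neg (by omega : ¬((v:ℤ) ≤ ⌊lam⌋)), if_neg hv,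
      show ((v:ℤ) + ⌈lam⌉).toNat = v + c from by omega]

lemma reindex (k : ℕ) (f : ℕ → ℕ → ℕ → ℤ) :
    ∑ x ∈ Finset.Nat.antidiagonalTuple 3 k, f (x 0) (x 1) (x 2)
    = ∑ p ∈ (Finset.range (k+1)).sigma (fun i => Finset.range (k+1-i)),
        f p.1 p.2 (k - p.1 - p.2) := by
  apply Finset.sum_nbij' (i := fun x => (⟨x 0, x 1⟩ : Σ _ : ℕ, ℕ))
    (j := fun p => ![p.1, p.2, k - p.1 - p.2])
  · intro x hx
    rw [Finset.Nat.mem_antidiagonalTuple, Fin.sum_univ_three] at hx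
    simp only [Finset.mem_sigma, Finset.mem_range]
    omega
  · intro p hp
    simp only [Finset.mem_sigma, Finset.mem_range] at hp
    rw [Finset.Nat.mem_antidiagonalTuple, Fin.sum_univ_three]
    simp only [Matrix.cons_val_zero, Matrix.cons_val_one, Matrix.head_cons,
      Matrix.cons_val_two, Matrix.tail_cons]
    omega
  · intro x hx
    rw [Finset.Nat.mem_antidiagonalTuple, Fin.sum_univ_three] at hx
    funext i
    fin_cases i <;> simp <;> omega
  · intro p hp
    simp
  · intro x hx
    rw [Finset.Nat.mem_antidiagonalTuple, Fin.sum_univ_three] at hx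
    have h2 : x 2 = k - x 0 - x 1 := by omega
    rw [h2]

lemma sum_card : ∀ k : ℕ, ∑ i ∈ Finset.range (k+1), (k+1-i) = (k+2).choose 2 := by
  intro k
  induction k with
  | zero => simp
  | succ k ih =>
    have e1 : ∀ i ∈ Finset.range (k+2), (k+2-i) = (k+1-i)+1 := by
      intro i hi; rw [Finset.mem_range] at hi; omega
    rw [Finset.sum_congr rfl e1, Finset.sum_add_distrib, Finset.sum_const,
      Finset.card_range, Finset.sum_range_succ, ih]
    have : (k+3).choose 2 = (k+2).choose 1 + (k+2).choose 2 := Nat.choose_succ_succ (k+2) 1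
    rw [Nat.choose_one_right] at this
    simp only [smul_eq_mul, mul_one]
    have h32 : k+1+2 = k+3 := by omega
    rw [h32, this]
    omega

lemma sumD2 (k : ℕ) (g : ℕ → ℤ) :
    ∑ p ∈ (Finset.range (k+1)).sigma (fun i => Finset.range (k+1-i)), g p.2
    = ∑ p ∈ (Finset.range (k+1)).sigma (fun i => Finset.range (k+1-i)), g p.1 := by
  apply Finset.sum_nbij' (i := fun p => (⟨p.2, p.1⟩ : Σ _ : ℕ, ℕ))
    (j := fun p => (⟨p.2, p.1⟩ : Σ _ : ℕ, ℕ)) <;>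
    simp only [Finset.mem_sigma, Finset.mem_range] <;> intros <;>
      first | omega | rfl | trivial

lemma sumD3 (k : ℕ) (g : ℕ → ℤ) :
    ∑ p ∈ (Finset.range (k+1)).sigma (fun i => Finset.range (k+1-i)), g (k - p.1 - p.2)
    = ∑ p ∈ (Finset.range (k+1)).sigma (fun i => Finset.range (k+1-i)), g p.1 := by
  apply Finset.sum_nbij' (i := fun p => (⟨k - p.1 - p.2, p.2⟩ : Σ _ : ℕ, ℕ))
    (j := fun p => (⟨k - p.1 - p.2, p.2⟩ : Σ _ : ℕ, ℕ))
  · simp only [Finset.mem_sigma, Finset.mem_range]; intros; omega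
  · simp only [Finset.mem_sigma, Finset.mem_range]; intros; omega
  · simp only [Finset.mem_sigma, Finset.mem_range]
    intro p hp
    have : k - (k - p.1 - p.2) - p.2 = p.1 := by omega
    exact Sigma.ext this (heq_of_eq rfl)
  · simp only [Finset.mem_sigma, Finset.mem_range]
    intro p hp
    have : k - (k - p.1 - p.2) - p.2 = p.1 := by omega
    exact Sigma.ext this (heq_of_eq rfl)
  · intros; rfl

lemma sumD1 (k c : ℕ) :
    ∑ p ∈ (Finset.range (k+1)).sigma (fun i => Finset.range (k+1-i)), Hh c p.1
    = -2 * (Fn c k : ℤ) := by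
  rw [Finset.sum_sigma]
  have e1 : ∀ i ∈ Finset.range (k+1),
      ∑ _j ∈ Finset.range (k+1-i), Hh c i = ((k+1-i : ℕ) : ℤ) * Hh c i := by
    intro i _
    rw [Finset.sum_const, Finset.card_range, nsmul_eq_mul]
  rw [Finset.sum_congr rfl e1, sumT]

lemma key (c₁ c₂ c₃ k : ℕ) (h1 : c₂ ≤ c₁) (h2 : c₃ ≤ c₂) (hk : k ≤ c₂ + c₃ + 1) :
    ∑ x ∈ Finset.Nat.antidiagonalTuple 3 k, Gg c₁ (x 0) * Gg c₂ (x 1) * Gg c₃ (x 2)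
    = ((k+2).choose 2 : ℤ) - 2*(Fn c₁ k : ℤ) - 2*(Fn c₂ k : ℤ) - 2*(Fn c₃ k : ℤ) := by
  rw [reindex k (fun a b c => Gg c₁ a * Gg c₂ b * Gg c₃ c)]
  have step1 : ∀ p ∈ (Finset.range (k+1)).sigma (fun i => Finset.range (k+1-i)),
      Gg c₁ p.1 * Gg c₂ p.2 * Gg c₃ (k-p.1-p.2)
      = 1 + Hh c₁ p.1 + Hh c₂ p.2 + Hh c₃ (k-p.1-p.2) := by
    intro p hp
    simp only [Finset.mem_sigma, Finset.mem_range] at hp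
    have hz12 : Hh c₁ p.1 * Hh c₂ p.2 = 0 := Hh_mul _ _ _ _ (by omega)
    have hz13 : Hh c₁ p.1 * Hh c₃ (k-p.1-p.2) = 0 := Hh_mul _ _ _ _ (by omega)
    have hz23 : Hh c₂ p.2 * Hh c₃ (k-p.1-p.2) = 0 := Hh_mul _ _ _ _ (by omega)
    rw [Gg_eq, Gg_eq, Gg_eq]
    linear_combination Hh c₃ (k-p.1-p.2) * hz12 + hz12 + hz13 + hz23
  rw [Finset.sum_congr rfl step1]
  rw [Finset.sum_add_distrib, Finset.sum_add_distrib, Finset.sum_add_distrib]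
  rw [sumD2 k (Hh c₂), sumD3 k (Hh c₃), sumD1, sumD1, sumD1]
  rw [Finset.sum_const, Finset.card_sigma]
  simp only [Finset.card_range]
  rw [sum_card k, nsmul_eq_mul, mul_one]
  ring

/-- for `λ₁ ≥ λ₂ ≥ λ₃ > 0` nonintegral and `0 ≤ k ≤ ⌈λ₂⌉ + ⌈λ₃⌉ + 1`,
`Σ_{i₁+i₂+i₃=k} f_{λ₁}(i₁)f_{λ₂}(i₂)f_{λ₃}(i₃) = C(k+2,2) − 2f₂(λ₁,k) − 2f₂(λ₂,k) − 2f₂(λ₃,k)`. -/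
theorem stmt_11 (lam₁ lam₂ lam₃ : ℝ) (h12 : lam₁ ≥ lam₂) (h23 : lam₂ ≥ lam₃) (h3 : lam₃ > 0)
    (hl1 : ∀ n : ℤ, lam₁ ≠ n) (hl2 : ∀ n : ℤ, lam₂ ≠ n) (hl3 : ∀ n : ℤ, lam₃ ≠ n)
    (k : ℕ) (hk : (k : ℤ) ≤ ⌈lam₂⌉ + ⌈lam₃⌉ + 1) :
    ∑ x ∈ Finset.Nat.antidiagonalTuple 3 k,
        fsig lam₁ (x 0) * fsig lam₂ (x 1) * fsig lam₃ (x 2) =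
      ((k + 2).choose 2 : ℤ) - 2 * fTwo lam₁ k - 2 * fTwo lam₂ k - 2 * fTwo lam₃ k := by
  have h2 : (0:ℝ) < lam₂ := lt_of_lt_of_le h3 h23
  have h1 : (0:ℝ) < lam₁ := lt_of_lt_of_le h2 h12
  have hcp1 : 0 < ⌈lam₁⌉ := Int.ceil_pos.mpr h1
  have hcp2 : 0 < ⌈lam₂⌉ := Int.ceil_pos.mpr h2
  have hcp3 : 0 < ⌈lam₃⌉ := Int.ceil_pos.mpr h3
  have hc1 : ⌈lam₁⌉ = ((⌈lam₁⌉.toNat : ℕ) : ℤ) := (Int.toNat_of_nonneg hcp1.le).symm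
  have hc2 : ⌈lam₂⌉ = ((⌈lam₂⌉.toNat : ℕ) : ℤ) := (Int.toNat_of_nonneg hcp2.le).symm
  have hc3 : ⌈lam₃⌉ = ((⌈lam₃⌉.toNat : ℕ) : ℤ) := (Int.toNat_of_nonneg hcp3.le).symm
  have hm12 : ⌈lam₂⌉ ≤ ⌈lam₁⌉ := Int.ceil_le_ceil h12
  have hm23 : ⌈lam₃⌉ ≤ ⌈lam₂⌉ := Int.ceil_le_ceil h23
  have e1 : ∀ x ∈ Finset.Nat.antidiagonalTuple 3 k,
      fsig lam₁ (x 0) * fsig lam₂ (x 1) * fsig lam₃ (x 2)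
      = Gg ⌈lam₁⌉.toNat (x 0) * Gg ⌈lam₂⌉.toNat (x 1) * Gg ⌈lam₃⌉.toNat (x 2) := by
    intro x _
    rw [fsig_eq lam₁ _ h1 hl1 hc1, fsig_eq lam₂ _ h2 hl2 hc2, fsig_eq lam₃ _ h3 hl3 hc3]
  rw [Finset.sum_congr rfl e1,
    key ⌈lam₁⌉.toNat ⌈lam₂⌉.toNat ⌈lam₃⌉.toNat k (by omega) (by omega) (by omega),
    fTwo_eq lam₁ _ hc1 k, fTwo_eq lam₂ _ hc2 k, fTwo_eq lam₃ _ hc3 k]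
end

section
/- Let λ_1 > 0 > λ_2 be reals with λ_1 ∉ ℤ and λ_1 + λ_2 < 0, λ_1 + λ_2 ∉ ℤ. With d defined as below for the generic pair (λ_1, λ_2), for every k ∈ ℕ: d(k) = sign(∏_{i=0}^{k−1} (λ_1 − i)), where the empty product is 1 and sign(x) = x/|x|. In particular every multiplicity space in M_{λ_1} ⊗ M_{λ_2} is definite. -/
open scoped Classical

/-- `convSig n lam k = Σ_{k₁+⋯+k_n = k} ∏_i f_{λ_i}(k_i)`, the coefficient of
`e^{λ−2k}` in the product of signature characters at `s = −1`. -/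
noncomputable def convSig (n : ℕ) (lam : Fin n → ℝ) (k : ℕ) : ℤ :=
  ∑ x ∈ Finset.Nat.antidiagonalTuple n k, ∏ i, fsig (lam i) (x i)

/-- for a generic pair `λ₁ > 0 > λ₂` with `λ₁ + λ₂ < 0`, the signature
of the level-`k` multiplicity space is `sign(∏_{i=0}^{k−1}(λ₁ − i))`; in particular
every multiplicity space in `M_{λ₁} ⊗ M_{λ₂}` is definite. -/
theorem stmt_12 (lam₁ lam₂ : ℝ) (h1 : lam₁ > 0) (h2 : 0 > lam₂)
    (hl1 : ∀ n : ℤ, lam₁ ≠ n) (hsum : lam₁ + lam₂ < 0) (hsumZ : ∀ n : ℤ, lam₁ + lam₂ ≠ n)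
    (d : ℕ → ℤ)
    (hd : ∀ k : ℕ, d k = convSig 2 ![lam₁, lam₂] k -
      ∑ m ∈ Finset.range k, d m * fsig ((lam₁ + lam₂) - 2 * m) ((k : ℤ) - m)) :
    ∀ k : ℕ,
      (d k : ℝ) = Real.sign (∏ i ∈ Finset.range k, (lam₁ - i)) ∧ (d k).natAbs = 1 := by
  have hN0 : (0:ℤ) ≤ ⌊lam₁⌋ := Int.le_floor.mpr (by exact_mod_cast h1.le)
  obtain ⟨N, hF⟩ : ∃ N : ℕ, ⌊lam₁⌋ = (N : ℤ) := ⟨⌊lam₁⌋.toNat, (Int.toNat_of_nonneg hN0).symm⟩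
  have hNlt : (N : ℝ) < lam₁ := by
    have hle : ((N : ℤ) : ℝ) ≤ lam₁ := by rw [← hF]; exact Int.floor_le _
    have hne : lam₁ ≠ ((N : ℤ) : ℝ) := hl1 N
    push_cast at hle ⊢
    exact lt_of_le_of_ne hle (fun h => hne (by push_cast; exact h.symm))
  have hltN1 : lam₁ < (N : ℝ) + 1 := by
    have := Int.lt_floor_add_one lam₁
    rw [hF] at this; push_cast at this; exact this
  have hC : ⌈lam₁⌉ = (N : ℤ) + 1 := by
    refine le_antisymm (Int.ceil_le.mpr ?_) (Int.add_one_le_iff.mpr (Int.lt_ceil.mpr ?_))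
    · push_cast; exact hltN1.le
    · push_cast; exact hNlt
  -- explicit formula for fsig lam₁
  have hfs1 : ∀ a : ℕ, fsig lam₁ (a : ℤ) = if a ≤ N then 1 else (-1:ℤ) ^ (a + N + 1) := by
    intro a
    unfold fsig
    rw [if_neg (by omega), if_neg (not_lt.mpr h1.le), hF, hC]
    by_cases h : a ≤ N
    · simp [h, show ((a:ℤ) ≤ (N:ℤ)) from by exact_mod_cast h]
    · rw [if_neg (by exact_mod_cast h), if_neg h,
        show ((a:ℤ) + ((N:ℤ) + 1)).toNat = a + N + 1 from by omega]
  have hfs2 : ∀ b : ℕ, fsig lam₂ (b : ℤ) = (-1:ℤ) ^ b := by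
    intro b
    unfold fsig
    rw [if_neg (by omega), if_pos h2]
    simp
  have hfneg : ∀ (k m : ℕ), m < k →
      fsig ((lam₁ + lam₂) - 2 * m) ((k : ℤ) - m) = (-1:ℤ) ^ (k - m) := by
    intro k m hm
    unfold fsig
    rw [if_neg (by omega), if_pos]
    · congr 1; omega
    · have : (0:ℝ) ≤ 2 * (m:ℝ) := by positivity
      linarith
  -- conv as a range sum
  have hconv : ∀ k : ℕ, convSig 2 ![lam₁, lam₂] k
      = ∑ a ∈ Finset.range (k+1), fsig lam₁ (a : ℤ) * (-1:ℤ) ^ (k - a) := by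
    intro k
    unfold convSig
    rw [Finset.Nat.antidiagonalTuple_two, Finset.sum_map]
    have hterm : ∀ p : ℕ × ℕ,
        (∏ i, fsig (![lam₁, lam₂] i) ((((piFinTwoEquiv fun _ => ℕ).symm.toEmbedding) p) i))
          = fsig lam₁ (p.1 : ℤ) * (-1:ℤ) ^ p.2 := by
      intro p
      rw [Fin.prod_univ_two]
      simp [piFinTwoEquiv, hfs2]
    rw [Finset.sum_congr rfl (fun p _ => hterm p)]
    exact Finset.Nat.sum_antidiagonal_eq_sum_range_succ
      (fun a b => fsig lam₁ (a : ℤ) * (-1:ℤ) ^ b) k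
  -- key convolution identity
  have hA : ∀ k : ℕ, ∑ m ∈ Finset.range (k+1), d m * (-1:ℤ) ^ (k - m)
      = convSig 2 ![lam₁, lam₂] k := by
    intro k
    have h := hd k
    rw [Finset.sum_congr rfl
      (fun m hm => by rw [hfneg k m (Finset.mem_range.mp hm)])] at h
    rw [Finset.sum_range_succ, Nat.sub_self, pow_zero, mul_one]
    linarith
  -- d k = fsig lam₁ k
  have hdk : ∀ k : ℕ, d k = fsig lam₁ (k : ℤ) := by
    intro k
    cases k with
    | zero =>
        have h := hd 0
        rw [hconv 0] at h
        simpa using h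
    | succ j =>
        have h := hd (j+1)
        rw [Finset.sum_congr rfl
          (fun m hm => by rw [hfneg (j+1) m (Finset.mem_range.mp hm)])] at h
        have hneg : ∑ m ∈ Finset.range (j+1), d m * (-1:ℤ) ^ (j + 1 - m)
            = - ∑ m ∈ Finset.range (j+1), d m * (-1:ℤ) ^ (j - m) := by
          rw [← Finset.sum_neg_distrib]
          refine Finset.sum_congr rfl (fun m hm => ?_)
          have hmj : m ≤ j := Nat.lt_succ_iff.mp (Finset.mem_range.mp hm)
          rw [show j + 1 - m = (j - m) + 1 from by omega, pow_succ]
          ring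
        rw [hneg, hA j] at h
        -- h : d (j+1) = conv (j+1) + conv j ; now telescope
        rw [h, hconv (j+1), hconv j, Finset.sum_range_succ (n := j+1), Nat.sub_self,
          pow_zero, mul_one]
        have hcancel : ∑ a ∈ Finset.range (j+1), fsig lam₁ (a : ℤ) * (-1:ℤ) ^ (j + 1 - a)
            = - ∑ a ∈ Finset.range (j+1), fsig lam₁ (a : ℤ) * (-1:ℤ) ^ (j - a) := by
          rw [← Finset.sum_neg_distrib]
          refine Finset.sum_congr rfl (fun a ha => ?_)
          have haj : a ≤ j := Nat.lt_succ_iff.mp (Finset.mem_range.mp ha)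
          rw [show j + 1 - a = (j - a) + 1 from by omega, pow_succ]
          ring
        rw [hcancel]
        push_cast
        ring
  -- the sign function s
  set s : ℕ → ℤ := fun k => if k ≤ N then 1 else (-1:ℤ) ^ (k + N + 1) with hs
  have hsval : ∀ k, s k = 1 ∨ s k = -1 := by
    intro k
    by_cases h : k ≤ N
    · left; simp [hs, h]
    · rcases Nat.even_or_odd (k + N + 1) with he | ho
      · left; simp [hs, h, he.neg_one_pow]
      · right; simp [hs, h, ho.neg_one_pow]
  -- positivity invariant
  have hpos : ∀ k : ℕ, 0 < (s k : ℝ) * ∏ i ∈ Finset.range k, (lam₁ - i) := by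
    intro k
    induction k with
    | zero => simp [hs]
    | succ j ih =>
        have hstep : 0 < ((s (j+1) * s j : ℤ) : ℝ) * (lam₁ - j) := by
          by_cases hj1 : j + 1 ≤ N
          · have : s (j+1) * s j = 1 := by simp [hs, hj1, Nat.le_of_succ_le hj1]
            rw [this]
            have : (j : ℝ) < lam₁ := by
              have : (j : ℝ) + 1 ≤ (N : ℝ) := by exact_mod_cast hj1
              linarith
            push_cast
            linarith
          · by_cases hj : j ≤ N
            · have hjN : j = N := by omega
              have : s (j+1) * s j = 1 := by
                have he : Even (j + 1 + N + 1) := by rw [hjN]; exact ⟨N + 1, by ring⟩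
                simp [hs, hj1, hj, he.neg_one_pow]
              rw [this]
              have : (j : ℝ) < lam₁ := by rw [hjN]; exact hNlt
              push_cast
              linarith
            · have : s (j+1) * s j = -1 := by
                have : (-1:ℤ) ^ (j + 1 + N + 1) * (-1:ℤ) ^ (j + N + 1) = -1 := by
                  rw [← pow_add]
                  have ho : Odd (j + 1 + N + 1 + (j + N + 1)) := ⟨j + N + 1, by ring⟩
                  exact ho.neg_one_pow
                simp [hs, hj1, hj, this]
              rw [this]
              have : lam₁ < (j : ℝ) := by
                have : (N : ℝ) + 1 ≤ (j : ℝ) := by exact_mod_cast (by omega : N + 1 ≤ j)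
                linarith
              push_cast
              nlinarith
        have hsq : ((s j : ℝ)) * (s j : ℝ) = 1 := by
          rcases hsval j with h | h <;> rw [h] <;> norm_num
        have heq : (((s (j+1) * s j : ℤ) : ℝ) * (lam₁ - j))
            * ((s j : ℝ) * ∏ i ∈ Finset.range j, (lam₁ - i))
            = (s (j+1) : ℝ) * ((∏ i ∈ Finset.range j, (lam₁ - i)) * (lam₁ - j)) := by
          push_cast
          linear_combination ((s (j+1) : ℤ) : ℝ) * (lam₁ - (j:ℝ))
            * (∏ i ∈ Finset.range j, (lam₁ - (i:ℝ))) * hsq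
        rw [Finset.prod_range_succ, ← heq]
        exact mul_pos hstep ih
  -- finish
  intro k
  have hdks : d k = s k := by rw [hdk k, hfs1 k]
  rcases hsval k with h | h
  · constructor
    · have hp : 0 < ∏ i ∈ Finset.range k, (lam₁ - i) := by
        have := hpos k
        rw [h] at this
        simpa using this
      rw [Real.sign_of_pos hp, hdks, h]
      norm_num
    · rw [hdks, h]; rfl
  · constructor
    · have hp : ∏ i ∈ Finset.range k, (lam₁ - i) < 0 := by
        have := hpos k
        rw [h] at this
        push_cast at this
        linarith
      rw [Real.sign_of_neg hp, hdks, h]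
      norm_num
    · rw [hdks, h]; rfl
end

section
/- Let n ≥ 2 and let λ_1,…,λ_n be reals с all λ_i < 0. With d defined as below for the generic tuple (λ_1,…,λ_n), for every k ∈ ℕ: d(k) = (−1)^k·C(k+n−2, n−2). In particular every multiplicity space in M_{λ_1} ⊗ ⋯ ⊗ M_{λ_n} is definite: even levels are positive definite and odd levels are negative definite. -/
open scoped Classical

lemma fsig_of_neg_s14 {lam : ℝ} (h : lam < 0) (k : ℤ) (hk : 0 ≤ k) :
    fsig lam k = (-1) ^ k.toNat := by
  simp [fsig, not_lt.2 hk, h]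

lemma card_adt (n k : ℕ) :
    (Finset.Nat.antidiagonalTuple n k).card = (n + k - 1).choose k := by
  rw [← Finset.piAntidiag_univ_fin_eq_antidiagonalTuple,
    ← Finset.map_sym_eq_piAntidiag, Finset.card_map, Finset.sym_univ,
    Finset.card_univ, Sym.card_sym_eq_choose, Fintype.card_fin]

lemma hockey (p : ℕ) : ∀ k : ℕ,
    ∑ m ∈ Finset.range k, ((m + p).choose p : ℤ) = ((k + p).choose (p + 1) : ℤ) := by
  intro k
  induction k with
  | zero => simp
  | succ k ih =>
    rw [Finset.sum_range_succ, ih]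
    have h : (k + p + 1).choose (p + 1) = (k + p).choose p + (k + p).choose (p + 1) :=
      Nat.choose_succ_succ (k + p) p
    push_cast [show k + 1 + p = k + p + 1 by ring, h]
    ring

lemma conv_aux (p : ℕ) (lam : Fin (p + 2) → ℝ) (hneg : ∀ i, lam i < 0) (k : ℕ) :
    convSig (p + 2) lam k = (-1) ^ k * ((k + p + 1).choose (p + 1) : ℤ) := by
  have hterm : ∀ x ∈ Finset.Nat.antidiagonalTuple (p + 2) k,
      (∏ i, fsig (lam i) (x i)) = (-1 : ℤ) ^ k := by
    intro x hx
    rw [Finset.Nat.mem_antidiagonalTuple] at hx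
    have h : ∀ i : Fin (p + 2), fsig (lam i) (x i) = (-1 : ℤ) ^ (x i) := by
      intro i
      rw [fsig_of_neg_s14 (hneg i) _ (Int.natCast_nonneg _)]
      simp
    rw [Finset.prod_congr rfl fun i _ => h i, Finset.prod_pow_eq_pow_sum, hx]
  rw [convSig, Finset.sum_congr rfl hterm, Finset.sum_const, card_adt, nsmul_eq_mul,
    mul_comm]
  congr 2
  have h1 : p + 2 + k - 1 = k + p + 1 := by omega
  rw [h1]
  have h := Nat.choose_symm (show k ≤ k + p + 1 by omega)
  simpa [show k + p + 1 - k = p + 1 by omega] using h.symm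

/-- Case 1 of Theorem 1.1: if all `λ_i < 0` then
`d(k) = (−1)^k·C(k+n−2, n−2)`; every multiplicity space in `⊗_i M_{λ_i}` is definite,
even levels positive definite and odd levels negative definite. -/
theorem stmt_14 (n : ℕ) (hn : 2 ≤ n) (lam : Fin n → ℝ) (hneg : ∀ i, lam i < 0)
    (d : ℕ → ℤ)
    (hd : ∀ k : ℕ, d k = convSig n lam k -
      ∑ m ∈ Finset.range k, d m * fsig ((∑ i, lam i) - 2 * m) ((k : ℤ) - m)) :
    ∀ k : ℕ, d k = (-1) ^ k * ((k + n - 2).choose (n - 2) : ℤ) := by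
  obtain ⟨p, rfl⟩ : ∃ p, n = p + 2 := ⟨n - 2, by omega⟩
  have hsum : (∑ i, lam i) < 0 :=
    Finset.sum_neg (fun i _ => hneg i) ⟨0, Finset.mem_univ _⟩
  intro k
  induction k using Nat.strong_induction_on with
  | _ k ih =>
    have hfs : ∀ m ∈ Finset.range k,
        fsig ((∑ i, lam i) - 2 * m) ((k : ℤ) - m) = (-1 : ℤ) ^ (k - m) := by
      intro m hm
      rw [Finset.mem_range] at hm
      have hl : (∑ i, lam i) - 2 * m < 0 := by
        have h2 : (0 : ℝ) ≤ 2 * m := by positivity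
        linarith
      rw [fsig_of_neg_s14 hl _ (by omega : (0:ℤ) ≤ (k : ℤ) - m)]
      congr 1
      omega
    have hsum2 : ∑ m ∈ Finset.range k, d m * fsig ((∑ i, lam i) - 2 * m) ((k : ℤ) - m)
        = (-1) ^ k * ((k + p).choose (p + 1) : ℤ) := by
      rw [Finset.sum_congr rfl fun m hm => by rw [hfs m hm, ih m (Finset.mem_range.mp hm)]]
      have hc : ∀ m ∈ Finset.range k,
          (-1 : ℤ) ^ m * ((m + (p + 2) - 2).choose (p + 2 - 2) : ℤ) * (-1) ^ (k - m)
            = (-1) ^ k * ((m + p).choose p : ℤ) := by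
        intro m hm
        rw [Finset.mem_range] at hm
        have h1 : m + (p + 2) - 2 = m + p := by omega
        have h2 : p + 2 - 2 = p := by omega
        rw [h1, h2, mul_right_comm, mul_comm ((-1 : ℤ) ^ m), ← pow_add,
          Nat.sub_add_cancel hm.le]
      rw [Finset.sum_congr rfl hc, ← Finset.mul_sum, hockey]
    rw [hd k, conv_aux p lam hneg k, hsum2]
    have h1 : k + (p + 2) - 2 = k + p := by omega
    have h2 : p + 2 - 2 = p := by omega
    rw [h1, h2, ← mul_sub]
    congr 1
    have h : (k + p + 1).choose (p + 1) = (k + p).choose p + (k + p).choose (p + 1) :=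
      Nat.choose_succ_succ (k + p) p
    push_cast [h]
    ring
end

section
/- Let n ≥ 3 and let λ_1,…,λ_n be reals with λ_1 > 0 > λ_2 ≥ ⋯ ≥ λ_n, λ_1 ∉ ℤ, and λ := λ_1+⋯+λ_n ∉ ℤ. Set K = max(0, ⌈λ/2⌉). With d defined as below for the generic tuple (λ_1,…,λ_n): for 0 ≤ k ≤ K one has d(k) = (−1)^k·C(k+n−2, n−2), and for every k > K one has |d(k)| < C(k+n−2, n−2). Equivalently, the definite multiplicity spaces in M_{λ_1} ⊗ ⋯ ⊗ M_{λ_n} are exactly those of level 0 through max(0, ⌈λ/2⌉), with even levels positive definite and odd levels negative definite. -/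
open scoped Classical

/-!
Write `F_μ = Σ_k f_μ(k) X^k`. Then `(1 + X) F_μ = 1` for `μ < 0`, while for `μ > 0` not an
integer `(1 + X) F_μ = 1 + 2X + ⋯ + 2X^(⌊μ⌋+1)`. Adding the defining relations of `d` at `k + 1`
and `k` therefore leaves only the levels `m ≤ min k (⌊λ⌋ - k)`, each with weight `2`:
`d(k+1) = V(k+1) + V(k) - 2 V(k-1-⌊λ_1⌋) - 2 Σ_{m ≤ min k (⌊λ⌋-k)} d(m)`, where
`V(j) = Σ_{t ≤ j} (-1)^t C(t+n-2, n-2)` is the coefficient of `X^j` in `(1 + X)^(1-n) / (1 - X)`.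
By induction `d(k) = (-1)^k C(k+n-2, n-2)` while `2k ≤ ⌊λ⌋ + 2`, which is `k ≤ max 0 ⌈λ/2⌉`.
Beyond that level `d(k+1) = V(k+1) + V(k) - 2 V(j)` for some `j < k`; since `(-1)^t V(t)` is
positive and strictly increasing along each parity class, this is smaller in absolute value than
`|V(k+1)| + |V(k)| = C(k+n-1, n-2)`.
-/

open Finset PowerSeries

lemma fsig_zero (μ : ℝ) : fsig μ 0 = 1 := by
  simp +contextual [fsig, Int.floor_nonneg]

lemma fsig_natCast_of_neg_s15 {μ : ℝ} (hμ : μ < 0) (j : ℕ) : fsig μ j = (-1) ^ j := by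
  simp [fsig, hμ]

lemma fsig_add_fsig_sub_one {μ : ℝ} (hμ : ∀ z : ℤ, μ ≠ z) {j : ℤ} (hj : 1 ≤ j) :
    fsig μ j + fsig μ (j - 1) = if 0 < μ ∧ j ≤ ⌊μ⌋ + 1 then 2 else 0 := by
  unfold fsig
  rw [if_neg (show ¬j < 0 by omega), if_neg (show ¬j - 1 < 0 by omega)]
  rcases (show μ ≠ 0 by exact_mod_cast hμ 0).lt_or_gt with hneg | hpos
  · have hsucc : j.toNat = (j - 1).toNat + 1 := by omega
    rw [if_pos hneg, if_pos hneg, if_neg (fun h => (h.1.trans hneg).false), hsucc, pow_succ]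
    ring
  have hceil : ⌈μ⌉ = ⌊μ⌋ + 1 :=
    (Int.ceil_eq_floor_add_one_iff_notMem μ).2 (by rintro ⟨z, rfl⟩; exact hμ z rfl)
  have hfloor : 0 ≤ ⌊μ⌋ := Int.floor_nonneg.2 hpos.le
  rw [if_neg (not_lt.2 hpos.le), if_neg (not_lt.2 hpos.le), hceil]
  rcases lt_trichotomy j (⌊μ⌋ + 1) with h | h | h
  · rw [if_pos (show j ≤ ⌊μ⌋ by omega), if_pos (show j - 1 ≤ ⌊μ⌋ by omega), if_pos ⟨hpos, h.le⟩]
    norm_num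
  · rw [if_neg (show ¬j ≤ ⌊μ⌋ by omega), if_pos (show j - 1 ≤ ⌊μ⌋ by omega), if_pos ⟨hpos, h.le⟩,
      Even.neg_one_pow ⟨(j - 1).toNat + 1, by omega⟩]
    norm_num
  · have hsucc : (j + (⌊μ⌋ + 1)).toNat = (j - 1 + (⌊μ⌋ + 1)).toNat + 1 := by omega
    rw [if_neg (show ¬j ≤ ⌊μ⌋ by omega), if_neg (show ¬j - 1 ≤ ⌊μ⌋ by omega),
      if_neg (show ¬(0 < μ ∧ j ≤ ⌊μ⌋ + 1) by omega), hsucc, pow_succ]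
    ring

-- Vanishes for `j < 0`, as `Int.toNat` truncates.
def altChooseSum (r : ℕ) (j : ℤ) : ℤ :=
  ∑ t ∈ range (j + 1).toNat, (-1) ^ t * ((t + r).choose r : ℤ)

lemma altChooseSum_of_neg (r : ℕ) {j : ℤ} (hj : j < 0) : altChooseSum r j = 0 := by
  simp [altChooseSum, show (j + 1).toNat = 0 by omega]

lemma altChooseSum_zero (r : ℕ) : altChooseSum r 0 = 1 := by
  simp [altChooseSum]

lemma altChooseSum_succ (r k : ℕ) :
    altChooseSum r (k + 1 : ℕ) =
      altChooseSum r k + (-1) ^ (k + 1) * ((k + 1 + r).choose r : ℤ) := by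
  simp only [altChooseSum, show ((k + 1 : ℕ) + 1 : ℤ).toNat = k + 1 + 1 by omega,
    show ((k : ℤ) + 1).toNat = k + 1 by omega, sum_range_succ _ (k + 1)]

lemma sum_range_ite_le_eq_altChooseSum {r k : ℕ} {N : ℤ} {d : ℕ → ℤ}
    (hd : ∀ m ≤ k, (m : ℤ) ≤ N → d m = (-1) ^ m * ((m + r).choose r : ℤ)) :
    ∑ m ∈ range (k + 1), (if (m : ℤ) ≤ N then d m else 0) = altChooseSum r (min N k) := by
  have hfilter :
      (range (k + 1)).filter (fun m : ℕ => (m : ℤ) ≤ N) = range (min N k + 1).toNat := by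
    ext m
    simp only [mem_filter, mem_range]
    omega
  rw [← sum_filter, hfilter, altChooseSum]
  refine sum_congr rfl fun m hm => hd m ?_ ?_ <;> simp only [mem_range] at hm <;> omega

lemma coeff_X_pow_mul_mk_altChooseSum (r i n : ℕ) :
    coeff n (X ^ i * PowerSeries.mk fun k : ℕ => altChooseSum r k) =
      altChooseSum r ((n : ℤ) - i) := by
  rw [coeff_X_pow_mul']
  split_ifs with h
  · rw [coeff_mk, Nat.cast_sub h]
  · rw [altChooseSum_of_neg r (by omega)]

lemma one_sub_X_mul_mk_altChooseSum (r : ℕ) :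
    (1 - X) * (PowerSeries.mk fun k : ℕ => altChooseSum r k) =
      rescale (-1) (PowerSeries.mk fun k => ((r + k).choose r : ℤ)) := by
  ext k
  rw [coeff_rescale, coeff_mk, sub_mul, one_mul, map_sub]
  cases k with
  | zero => simp [altChooseSum_zero]
  | succ k =>
    rw [coeff_succ_X_mul, coeff_mk, coeff_mk, altChooseSum_succ, add_comm r]
    ring

lemma neg_one_pow_mul_altChooseSum_add (r k : ℕ) :
    (-1) ^ (k + 1) * altChooseSum r (k + 1 : ℕ) + (-1) ^ k * altChooseSum r k =
      ((k + 1 + r).choose r : ℤ) := by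
  rw [altChooseSum_succ, pow_succ]
  linear_combination ((k + 1 + r).choose r : ℤ) * pow_mul_pow_eq_one k (neg_mul_neg (1 : ℤ) 1)

lemma neg_one_pow_mul_altChooseSum_add_two (s k : ℕ) :
    (-1) ^ (k + 2) * altChooseSum (s + 1) (k + 2 : ℕ) =
      (-1) ^ k * altChooseSum (s + 1) k + ((k + 2 + s).choose s : ℤ) := by
  have hpascal : (k + 1 + 1 + (s + 1)).choose (s + 1) =
      (k + 1 + (s + 1)).choose (s + 1) + (k + 2 + s).choose s := by
    rw [show k + 1 + 1 + (s + 1) = k + 2 + s + 1 by omega, Nat.choose_succ_succ', add_comm,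
      show k + 1 + (s + 1) = k + 2 + s by omega]
  have hpascal' := congrArg (Nat.cast (R := ℤ)) hpascal
  push_cast at hpascal'
  linear_combination neg_one_pow_mul_altChooseSum_add (s + 1) (k + 1) -
    neg_one_pow_mul_altChooseSum_add (s + 1) k + hpascal'

lemma neg_one_pow_mul_altChooseSum_lt (s t i : ℕ) :
    (-1) ^ t * altChooseSum (s + 1) t <
      (-1) ^ (t + 2 * (i + 1)) * altChooseSum (s + 1) (t + 2 * (i + 1) : ℕ) := by
  induction i with
  | zero =>
    rw [neg_one_pow_mul_altChooseSum_add_two]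
    have : 0 < (t + 2 + s).choose s := Nat.choose_pos (by omega)
    omega
  | succ i ih =>
    have h := neg_one_pow_mul_altChooseSum_add_two s (t + 2 * (i + 1))
    have : 0 < (t + 2 * (i + 1) + 2 + s).choose s := Nat.choose_pos (by omega)
    rw [show t + 2 * (i + 1 + 1) = t + 2 * (i + 1) + 2 by ring]
    omega

lemma neg_one_pow_mul_altChooseSum_pos (s k : ℕ) : 0 < (-1) ^ k * altChooseSum (s + 1) k := by
  induction k using Nat.strong_induction_on with
  | _ k ih =>
    rcases k with _ | _ | k
    · simp [altChooseSum_zero]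
    · have h := neg_one_pow_mul_altChooseSum_add (s + 1) 0
      rw [show 0 + 1 + (s + 1) = s + 1 + 1 by omega, Nat.choose_succ_self_right] at h
      norm_num [altChooseSum_zero] at h ⊢
      linarith
    · exact (ih k (by omega)).trans (neg_one_pow_mul_altChooseSum_lt s k 0)

lemma abs_altChooseSum_add_sub_lt (s k : ℕ) {j : ℤ} (hj : j < k) :
    |altChooseSum (s + 1) (k + 1 : ℕ) + altChooseSum (s + 1) k - 2 * altChooseSum (s + 1) j| <
      ((k + 1 + (s + 1)).choose (s + 1) : ℤ) := by
  rw [← neg_one_pow_mul_altChooseSum_add, abs_lt]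
  have hk : (-1 : ℤ) ^ k = -(-1) ^ (k + 1) := by rw [pow_succ]; ring
  have hk₁ := neg_one_pow_mul_altChooseSum_pos s (k + 1)
  have hk₀ := neg_one_pow_mul_altChooseSum_pos s k
  rcases lt_or_ge j 0 with hneg | hnn
  · rw [altChooseSum_of_neg _ hneg]
    rcases neg_one_pow_eq_or ℤ (k + 1) with h | h <;> simp only [h, hk] at hk₁ hk₀ ⊢ <;>
      constructor <;> linarith
  lift j to ℕ using hnn
  have hj₀ := neg_one_pow_mul_altChooseSum_pos s j
  obtain ⟨i, hi | hi⟩ : ∃ i, k + 1 = j + 2 * (i + 1) ∨ k = j + 2 * (i + 1) :=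
    ⟨(k - j - 1) / 2, by omega⟩
  · have hlt := neg_one_pow_mul_altChooseSum_lt s j i
    have hs : (-1 : ℤ) ^ j = (-1) ^ (k + 1) := by rw [hi, pow_add, pow_mul]; norm_num
    rw [← hi] at hlt
    rcases neg_one_pow_eq_or ℤ (k + 1) with h | h <;>
      simp only [h, hk, hs] at hk₁ hk₀ hj₀ hlt ⊢ <;> constructor <;> linarith
  · have hlt := neg_one_pow_mul_altChooseSum_lt s j i
    have hs : (-1 : ℤ) ^ j = -(-1) ^ (k + 1) := by rw [← hk, hi, pow_add, pow_mul]; norm_num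
    rw [← hi] at hlt
    rcases neg_one_pow_eq_or ℤ (k + 1) with h | h <;>
      simp only [h, hk, hs] at hk₁ hk₀ hj₀ hlt ⊢ <;> constructor <;> linarith

noncomputable def fsigSeries (μ : ℝ) : ℤ⟦X⟧ := PowerSeries.mk fun j => fsig μ j

lemma fsigSeries_of_neg {μ : ℝ} (hμ : μ < 0) :
    fsigSeries μ = rescale (-1) (PowerSeries.mk 1) := by
  ext j
  simp [fsigSeries, coeff_rescale, fsig_natCast_of_neg_s15 hμ]

lemma one_add_X_mul_fsigSeries_of_pos {μ : ℝ} (hμ : ∀ z : ℤ, μ ≠ z) (hpos : 0 < μ) :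
    (1 + X) * fsigSeries μ = 2 * ∑ i ∈ range (⌊μ⌋.toNat + 2), X ^ i - 1 := by
  ext j
  rw [add_mul, one_mul, two_mul, map_add, map_sub, map_add, map_sum]
  simp only [coeff_X_pow, sum_ite_eq, mem_range]
  rcases j with _ | j
  · simp [fsigSeries, fsig_zero]
  · rw [coeff_succ_X_mul, fsigSeries, coeff_mk, coeff_mk]
    have hpair := fsig_add_fsig_sub_one hμ (j := (j + 1 : ℕ)) (by omega)
    push_cast at hpair ⊢
    rw [add_sub_cancel_right] at hpair
    rw [hpair]
    have : 0 ≤ ⌊μ⌋ := Int.floor_nonneg.2 hpos.le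
    simp only [hpos, true_and, coeff_one, Nat.add_one_ne_zero, if_false]
    split_ifs <;> omega

lemma convSig_eq_coeff_prod (n : ℕ) (lam : Fin n → ℝ) (k : ℕ) :
    convSig n lam k = coeff k (∏ i, fsigSeries (lam i)) := by
  rw [coeff_prod, convSig, ← piAntidiag_univ_fin_eq_antidiagonalTuple]
  refine sum_nbij' (fun x => Finsupp.equivFunOnFinite.symm x) (fun l => ⇑l) ?_ ?_ ?_ ?_ ?_
  · intro x hx
    rw [mem_piAntidiag] at hx
    rw [mem_finsuppAntidiag]
    exact ⟨hx.1, subset_univ _⟩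
  · intro l hl
    rw [mem_finsuppAntidiag] at hl
    exact mem_piAntidiag.2 ⟨hl.1, fun i _ => mem_univ i⟩
  · intro x _
    rfl
  · intro l _
    ext i
    simp
  · intro x _
    simp [fsigSeries]

lemma convSig_zero (n : ℕ) (lam : Fin n → ℝ) : convSig n lam 0 = 1 := by
  simp [convSig_eq_coeff_prod, ← coeff_zero_eq_constantCoeff_apply, fsigSeries, fsig_zero]

lemma one_add_X_mul_prod_fsigSeries {n : ℕ} (hn : 2 ≤ n) (lam : Fin n → ℝ) (i₀ : Fin n)
    (h₀ : ∀ z : ℤ, lam i₀ ≠ z) (hpos : 0 < lam i₀) (hneg : ∀ i, i ≠ i₀ → lam i < 0) :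
    (1 + X) * ∏ i, fsigSeries (lam i) =
      (1 + X - 2 * X ^ (⌊lam i₀⌋.toNat + 2)) *
        PowerSeries.mk fun k : ℕ => altChooseSum (n - 2) k := by
  rw [← mul_prod_erase univ _ (mem_univ i₀),
    prod_congr rfl (fun i hi => fsigSeries_of_neg (hneg i (ne_of_mem_erase hi))), prod_const,
    card_erase_of_mem (mem_univ _), card_univ, Fintype.card_fin, show n - 1 = n - 2 + 1 by omega,
    ← map_pow, mk_one_pow_eq_mk_choose_add, ← one_sub_X_mul_mk_altChooseSum, ← mul_assoc,
    one_add_X_mul_fsigSeries_of_pos h₀ hpos]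
  linear_combination (2 * PowerSeries.mk fun k : ℕ => altChooseSum (n - 2) k) *
    mul_neg_geom_sum (X : ℤ⟦X⟧) (⌊lam i₀⌋.toNat + 2)

lemma convSig_succ_add_convSig {n : ℕ} (hn : 2 ≤ n) (lam : Fin n → ℝ) (i₀ : Fin n)
    (h₀ : ∀ z : ℤ, lam i₀ ≠ z) (hpos : 0 < lam i₀) (hneg : ∀ i, i ≠ i₀ → lam i < 0) (k : ℕ) :
    convSig n lam (k + 1) + convSig n lam k =
      altChooseSum (n - 2) (k + 1 : ℕ) + altChooseSum (n - 2) k -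
        2 * altChooseSum (n - 2) (k - 1 - ⌊lam i₀⌋) := by
  have h := congrArg (coeff (k + 1)) (one_add_X_mul_prod_fsigSeries hn lam i₀ h₀ hpos hneg)
  rw [add_mul, one_mul, map_add, coeff_succ_X_mul, ← convSig_eq_coeff_prod,
    ← convSig_eq_coeff_prod] at h
  rw [h, sub_mul, add_mul, one_mul, mul_assoc, two_mul, map_sub, map_add, map_add,
    coeff_succ_X_mul, coeff_mk, coeff_mk, coeff_X_pow_mul_mk_altChooseSum]
  have : 0 ≤ ⌊lam i₀⌋ := Int.floor_nonneg.2 hpos.le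
  rw [show ((k + 1 : ℕ) : ℤ) - ((⌊lam i₀⌋.toNat + 2 : ℕ) : ℤ) = k - 1 - ⌊lam i₀⌋ by omega]
  ring

lemma ceil_half_eq_floor_div_two_add_one {x : ℝ} (hx : ∀ z : ℤ, x ≠ z) :
    ⌈x / 2⌉ = ⌊x⌋ / 2 + 1 := by
  have h₁ : (⌊x⌋ : ℝ) < x := (Int.floor_le x).lt_of_ne (hx _).symm
  have h₂ := Int.lt_floor_add_one x
  obtain ⟨q, hq⟩ : ∃ q, q = ⌊x⌋ / 2 := ⟨_, rfl⟩
  have h₃ : (2 * q : ℝ) ≤ ⌊x⌋ := by exact_mod_cast (show 2 * q ≤ ⌊x⌋ by omega)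
  have h₄ : (⌊x⌋ : ℝ) ≤ 2 * q + 1 := by exact_mod_cast (show ⌊x⌋ ≤ 2 * q + 1 by omega)
  rw [Int.ceil_eq_iff, ← hq]
  push_cast
  constructor <;> linarith

lemma succ_eq_of_unitriangular {c d : ℕ → ℤ} {g : ℕ → ℤ → ℤ}
    (hd : ∀ k : ℕ, d k = c k - ∑ m ∈ range k, d m * g m ((k : ℤ) - m)) (hg : ∀ m, g m 0 = 1)
    (k : ℕ) :
    d (k + 1) = c (k + 1) + c k -
      ∑ m ∈ range (k + 1), d m * (g m ((k + 1 : ℕ) - m) + g m ((k : ℤ) - m)) := by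
  have h := hd k
  rw [hd (k + 1)]
  simp only [mul_add, sum_add_distrib, sum_range_succ _ k, sub_self, hg] at h ⊢
  linarith

lemma signature_succ {L : ℝ} (hL : ∀ z : ℤ, L ≠ z) {c d : ℕ → ℤ}
    (hd : ∀ k : ℕ, d k = c k - ∑ m ∈ range k, d m * fsig (L - 2 * m) ((k : ℤ) - m)) (k : ℕ) :
    d (k + 1) = c (k + 1) + c k -
      2 * ∑ m ∈ range (k + 1), (if (m : ℤ) ≤ ⌊L⌋ - k then d m else 0) := by
  rw [succ_eq_of_unitriangular hd (fun m => fsig_zero _), mul_sum]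
  congr 1
  refine sum_congr rfl fun m hm => ?_
  rw [mem_range] at hm
  have hμ : ∀ z : ℤ, L - 2 * m ≠ z := fun z h => hL (z + 2 * m) (by push_cast; linarith)
  have hpair := fsig_add_fsig_sub_one hμ (j := (k + 1 : ℕ) - m) (by omega)
  rw [show ((k + 1 : ℕ) : ℤ) - m - 1 = k - m by push_cast; ring] at hpair
  have hfloor : ⌊L - 2 * (m : ℝ)⌋ = ⌊L⌋ - 2 * m := by
    rw [show L - 2 * (m : ℝ) = L - ((2 * m : ℕ) : ℝ) by push_cast; ring, Int.floor_sub_natCast]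
    push_cast; ring
  have hpos : 0 < L - 2 * (m : ℝ) ↔ 2 * (m : ℤ) ≤ ⌊L⌋ := by
    rw [sub_pos, Int.le_floor]
    push_cast
    exact ⟨le_of_lt, fun h => h.lt_of_ne fun h' => hμ 0 (by push_cast; linarith)⟩
  simp only [hpair, hfloor, hpos]
  split_ifs <;> omega

-- `a` and `b` stand for `⌊λ₁⌋` and `⌊λ⌋`.
def SignatureRecursion (r : ℕ) (a b : ℤ) (d : ℕ → ℤ) : Prop :=
  d 0 = 1 ∧ ∀ k : ℕ, d (k + 1) = altChooseSum r (k + 1 : ℕ) + altChooseSum r k -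
    2 * altChooseSum r (k - 1 - a) - 2 * ∑ m ∈ range (k + 1), (if (m : ℤ) ≤ b - k then d m else 0)

lemma SignatureRecursion.eq_of_two_mul_le {r : ℕ} {a b : ℤ} {d : ℕ → ℤ}
    (hd : SignatureRecursion r a b d) (hba : b ≤ a) {k : ℕ} (hk : k = 0 ∨ 2 * (k : ℤ) ≤ b + 2) :
    d k = (-1) ^ k * ((k + r).choose r : ℤ) := by
  induction k using Nat.strong_induction_on with
  | _ k ih =>
    rcases k with _ | k
    · simp [hd.1]
    rw [hd.2, sum_range_ite_le_eq_altChooseSum fun m hm _ => ih m (by omega) (by omega),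
      min_eq_right (by omega), altChooseSum_of_neg r (show (k : ℤ) - 1 - a < 0 by omega),
      altChooseSum_succ]
    ring

lemma SignatureRecursion.abs_lt {s : ℕ} {a b : ℤ} {d : ℕ → ℤ}
    (hd : SignatureRecursion (s + 1) a b d) (ha : 0 ≤ a) (hba : b ≤ a) {k : ℕ} (hk : b < 2 * k) :
    |d (k + 1)| < ((k + 1 + (s + 1)).choose (s + 1) : ℤ) := by
  rw [hd.2, sum_range_ite_le_eq_altChooseSum fun m _ hm => hd.eq_of_two_mul_le hba (by omega),
    min_eq_left (by omega)]
  rcases lt_or_ge ((k : ℤ) - 1 - a) 0 with h | h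
  · rw [altChooseSum_of_neg _ h]
    convert abs_altChooseSum_add_sub_lt s k (j := b - k) (by omega) using 2
    ring
  · rw [altChooseSum_of_neg _ (show b - k < 0 by omega)]
    convert abs_altChooseSum_add_sub_lt s k (j := k - 1 - a) (by omega) using 2
    ring

/-- Case 3 of Theorem 1.1: exactly one positive highest weight, `n ≥ 3`.
With `K = max(0, ⌈λ/2⌉)`, the definite multiplicity spaces are exactly levels `0` to `K`,
with `d(k) = (−1)^k·C(k+n−2,n−2)` there and `|d(k)| < C(k+n−2,n−2)` beyond. -/
theorem stmt_15 (n : ℕ) (hn : 3 ≤ n) (lam : Fin n → ℝ)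
    (h1 : 0 < lam ⟨0, by omega⟩)
    (hneg : ∀ i : Fin n, 1 ≤ (i : ℕ) → lam i < 0)
    (hl1 : ∀ z : ℤ, lam ⟨0, by omega⟩ ≠ z)
    (hsumZ : ∀ z : ℤ, (∑ i, lam i) ≠ z)
    (d : ℕ → ℤ)
    (hd : ∀ k : ℕ, d k = convSig n lam k -
      ∑ m ∈ Finset.range k, d m * fsig ((∑ i, lam i) - 2 * m) ((k : ℤ) - m)) :
    ∀ k : ℕ,
      ((k : ℤ) ≤ max 0 ⌈(∑ i, lam i) / 2⌉ →
        d k = (-1) ^ k * ((k + n - 2).choose (n - 2) : ℤ)) ∧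
      (max 0 ⌈(∑ i, lam i) / 2⌉ < (k : ℤ) →
        |d k| < ((k + n - 2).choose (n - 2) : ℤ)) := by
  set i₀ : Fin n := ⟨0, by omega⟩
  have hneg' : ∀ i, i ≠ i₀ → lam i < 0 := fun i hi => hneg i (by
    rw [Nat.one_le_iff_ne_zero]
    exact fun h => hi (Fin.ext h))
  have hba : ⌊∑ i, lam i⌋ ≤ ⌊lam i₀⌋ := by
    refine Int.floor_le_floor ?_
    rw [← add_sum_erase _ _ (mem_univ i₀)]
    linarith [sum_nonpos fun i (hi : i ∈ univ.erase i₀) => (hneg' i (ne_of_mem_erase hi)).le]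
  have hrec : SignatureRecursion (n - 2) ⌊lam i₀⌋ ⌊∑ i, lam i⌋ d := by
    refine ⟨by rw [hd 0, sum_range_zero, convSig_zero, sub_zero], fun k => ?_⟩
    rw [signature_succ hsumZ hd k, convSig_succ_add_convSig (by omega) lam i₀ hl1 h1 hneg' k]
  rw [ceil_half_eq_floor_div_two_add_one hsumZ]
  intro k
  refine ⟨fun hk => ?_, fun hk => ?_⟩
  · rw [show k + n - 2 = k + (n - 2) by omega]
    exact hrec.eq_of_two_mul_le hba (by omega)
  · obtain ⟨k, rfl⟩ : ∃ k', k = k' + 1 := ⟨k - 1, by omega⟩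
    obtain ⟨s, hs⟩ : ∃ s, n - 2 = s + 1 := ⟨n - 3, by omega⟩
    rw [show k + 1 + n - 2 = k + 1 + (s + 1) by omega, hs]
    rw [hs] at hrec
    exact hrec.abs_lt (Int.floor_nonneg.2 h1.le) hba (by omega)
end

section
/- Let n ≥ 3 and let λ_1,…,λ_n be reals with λ_1 ≥ ⋯ ≥ λ_n > 0, none of the λ_i an integer, and λ := λ_1+⋯+λ_n ∉ ℤ. With d defined as below: for every 0 ≤ k ≤ ⌈λ_n⌉ one has d(k) = C(k+n−2, n−2); that is, the multiplicity spaces of levels 0 through ⌈λ_n⌉ in M_{λ_1} ⊗ ⋯ ⊗ M_{λ_n} are positive definite. -/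
open scoped Classical

/-!
At levels `k ≤ ⌈λ_n⌉` every sign in the recursion for `d` is `+1`: each `k_i ≤ k ≤ ⌈λ_i⌉`, and
for `m < k` the weight `λ - 2m` is still positive with `k - m ≤ ⌈λ - 2m⌉`. The recursion then
says that the partial sums `d 0 + ⋯ + d k` count the `n`-tuples with sum `k`, i.e. equal
`C(n - 1 + k, n - 1)`, and Pascal's rule turns the differences into `C(k + n - 2, n - 2)`.
-/

open Finset

theorem fsig_eq_one {lam : ℝ} {k : ℤ} (hlam : 0 < lam) (hk₀ : 0 ≤ k) (hk : k ≤ ⌈lam⌉) :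
    fsig lam k = 1 := by
  unfold fsig
  rw [if_neg (by omega), if_neg (by linarith)]
  split_ifs with hfloor
  · rfl
  · have hk_eq : k = ⌈lam⌉ := by linarith [Int.ceil_le_floor_add_one lam]
    have hceil_pos : 0 < ⌈lam⌉ := Int.ceil_pos.2 hlam
    exact Even.neg_one_pow ⟨⌈lam⌉.toNat, by omega⟩

theorem card_antidiagonalTuple_succ (p k : ℕ) :
    #(Nat.antidiagonalTuple (p + 1) k) = (p + k).choose p := by
  rw [← piAntidiag_univ_fin_eq_antidiagonalTuple, ← map_sym_eq_piAntidiag, card_map, sym_univ,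
    ← Fintype.card, Sym.card_sym_eq_choose, Fintype.card_fin,
    add_right_comm, Nat.add_sub_cancel, Nat.choose_symm_add]

theorem convSig_eq_choose {p k : ℕ} {lam : Fin (p + 1) → ℝ} (hpos : ∀ i, 0 < lam i)
    (hk : ∀ i, (k : ℤ) ≤ ⌈lam i⌉) : convSig (p + 1) lam k = (p + k).choose p := by
  have hterm : ∀ x ∈ Nat.antidiagonalTuple (p + 1) k, ∏ i, fsig (lam i) (x i) = 1 := by
    intro x hx
    refine prod_eq_one fun i _ => fsig_eq_one (hpos i) (Int.natCast_nonneg _) ?_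
    have hxi : x i ≤ k := Nat.mem_antidiagonalTuple.mp hx ▸ single_le_sum (by simp) (mem_univ i)
    exact le_trans (by exact_mod_cast hxi) (hk i)
  rw [convSig, sum_congr rfl hterm, sum_const, card_antidiagonalTuple_succ, nsmul_one]

theorem fsig_sub_two_mul_eq_one {lamSum lamMin : ℝ} (hsum : 2 * lamMin ≤ lamSum) {k m : ℕ}
    (hmk : m < k) (hk : (k : ℤ) ≤ ⌈lamMin⌉) : fsig (lamSum - 2 * m) ((k : ℤ) - m) = 1 := by
  have hceil_lt : (⌈lamMin⌉ : ℝ) - 1 < lamMin := by linarith [Int.ceil_lt_add_one lamMin]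
  have hmk' : (m : ℤ) + 1 ≤ k := by exact_mod_cast hmk
  have hm : (m : ℝ) + 1 ≤ ⌈lamMin⌉ := by exact_mod_cast hmk'.trans hk
  have hceil_sum : 2 * ⌈lamMin⌉ - 1 ≤ ⌈lamSum⌉ := by
    have : ((2 * ⌈lamMin⌉ - 2 : ℤ) : ℝ) < lamSum := by push_cast; linarith
    linarith [Int.lt_ceil.2 this]
  have hshift : ⌈lamSum - 2 * (m : ℝ)⌉ = ⌈lamSum⌉ - 2 * m := by
    simpa using Int.ceil_sub_intCast lamSum (2 * m)
  refine fsig_eq_one (by linarith) (by omega) ?_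
  rw [hshift]
  omega

/-- first assertion of Case 6 of Theorem 1.1: all highest weights
positive; the multiplicity spaces of levels `0` through `⌈λ_n⌉` are positive definite. -/
theorem stmt_18 (n : ℕ) (hn : 3 ≤ n) (lam : Fin n → ℝ) (hanti : Antitone lam)
    (hpos : ∀ i : Fin n, 0 < lam i)
    (d : ℕ → ℤ)
    (hd : ∀ k : ℕ, d k = convSig n lam k -
      ∑ m ∈ Finset.range k, d m * fsig ((∑ i, lam i) - 2 * m) ((k : ℤ) - m)) :
    ∀ k : ℕ, (k : ℤ) ≤ ⌈lam ⟨n - 1, by omega⟩⌉ →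
      d k = ((k + n - 2).choose (n - 2) : ℤ) := by
  set lamMin := lam ⟨n - 1, by omega⟩
  have hmin : ∀ i, lamMin ≤ lam i := fun i => hanti (Fin.mk_le_mk.2 (by omega))
  have hsum : 2 * lamMin ≤ ∑ i, lam i := by
    have htwo : (2 : ℝ) ≤ n := by exact_mod_cast (by omega : 2 ≤ n)
    have := card_nsmul_le_sum univ lam lamMin fun i _ => hmin i
    rw [card_univ, Fintype.card_fin, nsmul_eq_mul] at this
    nlinarith [hpos ⟨n - 1, by omega⟩]
  obtain ⟨p, rfl⟩ : ∃ p, n = p + 2 := ⟨n - 2, by omega⟩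
  have hpartial : ∀ j : ℕ, (j : ℤ) ≤ ⌈lamMin⌉ →
      ∑ m ∈ range (j + 1), d m = (p + 1 + j).choose (p + 1) := by
    intro j hj
    have hsigns : ∀ m ∈ range j,
        d m * fsig ((∑ i, lam i) - 2 * m) ((j : ℤ) - m) = d m := fun m hm => by
      rw [fsig_sub_two_mul_eq_one hsum (mem_range.1 hm) hj, mul_one]
    rw [sum_range_succ, hd j, sum_congr rfl hsigns,
      convSig_eq_choose hpos fun i => hj.trans (Int.ceil_le_ceil (hmin i))]
    ring
  intro k hk
  cases k with
  | zero => simpa using hpartial 0 hk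
  | succ j =>
    rw [show j + 1 + (p + 2) - 2 = p + 1 + j by omega, ← sum_range_succ_sub_sum d,
      hpartial (j + 1) hk, hpartial j (by omega), show p + 1 + (j + 1) = p + 1 + j + 1 by ring,
      Nat.choose_succ_succ']
    push_cast
    ring
end
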